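/- arXiv:2111.05070 — 10 statements merged into one kernel-verified Lean document; each statement's English description precedes it below -/
import Mathlib

section
/- Let G be a finite undirected chordal graph on n vertices whose largest clique has size ω, and let 𝒞 be the set of maximal cliques of G. Then n − |𝒞| ≥ ω − 1. -/
/-- A graph is chordal iff it has no induced cycle of length at least 4
(equivalently, every cycle of length at least 4 has a chord). -/
def Chordal {V : Type*} (G : SimpleGraph V) : Prop :=
  ∀ n : ℕ, 4 ≤ n → IsEmpty (SimpleGraph.cycleGraph n ↪g G)

/-!
Every chordal `G[U]` has a simplicial vertex, one whose neighbourhood is a clique (Dirac). For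
nonadjacent `a, b ∈ U`, let `Y` be the component of `b` in `U` minus the closed neighbourhood of
`a`, and `S` the set of vertices of `U` outside `Y` adjacent to `Y`; then `G[U] - S` has full
components `X ∋ a` and `Y ∋ b`. Two nonadjacent vertices of `S` would be joined by chordless paths
through `X` and through `Y`, closing up to a chordless cycle of length at least four, so `S` is a
clique; induction on `X ∪ S` and `Y ∪ S` then yields simplicial vertices in `X` and in `Y`.

Deleting a simplicial vertex `v` loses one vertex. If `N(v)` is still a maximal clique of `G - v`,
then `G` has no more maximal cliques than `G - v` and a clique number larger by at most one;
otherwise `G` has at most one more maximal clique, `N(v) ∪ {v}`, and the same clique number.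
Either way `ω + |𝒞| ≤ n + 1` passes from `G - v` to `G`.
-/

namespace SimpleGraph

variable {V : Type*} {G : SimpleGraph V} {s t U S X Y K C : Set V} {a b u v w x y : V}

namespace Walk

lemma getVert_add_one_mod_length {c : G.Walk v v} {i : ℕ} (hi : i < c.length) :
    c.getVert ((i + 1) % c.length) = c.getVert (i + 1) := by
  by_cases h : i + 1 < c.length
  · rw [Nat.mod_eq_of_lt h]
  · rw [show i + 1 = c.length by omega, Nat.mod_self, getVert_zero, getVert_length]

lemma IsCycle.cycleGraph_isIndContained {c : G.Walk v v} (hc : c.IsCycle)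
    (hcl : c.IsChordless) : cycleGraph c.length ⊴ G := by
  obtain ⟨m, hm⟩ : ∃ m, c.length = m + 2 := ⟨c.length - 2, by have := hc.three_le_length; omega⟩
  have hsucc (i : Fin (m + 2)) : c.getVert ↑(i + 1) = c.getVert (i + 1) := by
    have := getVert_add_one_mod_length (c := c) (i := i) (by omega)
    rwa [hm, ← Fin.val_one, ← Fin.val_add] at this
  have hinj : Function.Injective fun i : Fin (m + 2) ↦ c.getVert i := fun i j h ↦
    Fin.ext (hc.getVert_injOn' (by simp; omega) (by simp; omega) h)
  rw [hm]
  refine ⟨⟨⟨_, hinj⟩, fun {i j} ↦ ?_⟩⟩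
  simp only [Function.Embedding.coeFn_mk, cycleGraph_adj, sub_eq_iff_eq_add']
  constructor
  · intro h
    obtain ⟨k, hk, hkij⟩ := (mk_mem_edges_iff_exists c).mp
      (hcl.mem_edges (c.getVert_mem_support _) (c.getVert_mem_support _) h)
    set k' : Fin (m + 2) := ⟨k, by omega⟩
    rw [show k = k' from rfl, ← hsucc, Sym2.eq_iff] at hkij
    rcases hkij with ⟨h₁, h₂⟩ | ⟨h₁, h₂⟩
    · exact .inr (by rw [← hinj h₂, ← hinj h₁])
    · exact .inl (by rw [← hinj h₂, ← hinj h₁])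
  · rintro (rfl | rfl)
    · rw [hsucc]
      exact (c.adj_getVert_succ (by omega)).symm
    · rw [hsucc]
      exact c.adj_getVert_succ (by omega)

lemma IsChordless.append {p : G.Walk u v} {q : G.Walk v w} (hp : p.IsChordless)
    (hq : q.IsChordless)
    (hpq : ∀ x ∈ p.support, ∀ y ∈ q.support, G.Adj x y → x ∈ q.support ∨ y ∈ p.support) :
    (p.append q).IsChordless := by
  have key : ∀ x ∈ p.support, ∀ y ∈ q.support, G.Adj x y → s(x, y) ∈ (p.append q).edges := by
    intro x hx y hy h
    rw [edges_append, List.mem_append]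
    rcases hpq x hx y hy h with hxq | hyp
    · exact .inr (hq.mem_edges hxq hy h)
    · exact .inl (hp.mem_edges hx hyp h)
  rw [isChordless_iff_forall_mem_edges]
  intro x y hx hy h
  rw [mem_support_append_iff] at hx hy
  rcases hx with hx | hx <;> rcases hy with hy | hy
  · exact edges_append p q ▸ List.mem_append_left _ (hp.mem_edges hx hy h)
  · exact key x hx y hy h
  · exact Sym2.eq_swap ▸ key y hy x hx h.symm
  · exact edges_append p q ▸ List.mem_append_right _ (hq.mem_edges hx hy h)

lemma isChordless_of_forall_length_le {p : G.Walk u v}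
    (hps : ∀ z ∈ p.support, z ∈ s)
    (hmin : ∀ q : G.Walk u v, (∀ z ∈ q.support, z ∈ s) → p.length ≤ q.length) :
    p.IsChordless := by
  rw [isChordless_iff_forall_mem_edges]
  suffices h : ∀ i j, i < j → j ≤ p.length → G.Adj (p.getVert i) (p.getVert j) → j = i + 1 by
    intro x y hx hy hxy
    obtain ⟨i, rfl, hi⟩ := mem_support_iff_exists_getVert.mp hx
    obtain ⟨j, rfl, hj⟩ := mem_support_iff_exists_getVert.mp hy
    rw [mk_mem_edges_iff_exists]
    rcases lt_trichotomy i j with hij | rfl | hij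
    · exact ⟨i, by omega, by rw [← h i j hij hj hxy]⟩
    · exact absurd hxy G.irrefl
    · exact ⟨j, by omega, by rw [← h j i hij hi hxy.symm, Sym2.eq_swap]⟩
  intro i j hij hj hadj
  by_contra hne
  let q : G.Walk u v := (p.take i).append (cons hadj (p.drop j))
  have hqs : ∀ z ∈ q.support, z ∈ s := by
    intro z hz
    simp only [q, mem_support_append_iff, support_cons, List.mem_cons, support_take,
      drop_support_eq_support_drop_min] at hz
    rcases hz with hz | rfl | hz
    · exact hps z (List.mem_of_mem_take hz)
    · exact hps _ (p.getVert_mem_support i)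
    · exact hps z (List.mem_of_mem_drop hz)
  have := hmin q hqs
  simp only [q, length_append, length_cons, take_length, drop_length] at this
  omega

lemma exists_isPath_isChordless_of_support_subset (p : G.Walk u v)
    (hps : ∀ z ∈ p.support, z ∈ s) :
    ∃ q : G.Walk u v, q.IsPath ∧ q.IsChordless ∧ ∀ z ∈ q.support, z ∈ s := by
  classical
  obtain ⟨q, hqs, hmin⟩ : ∃ q : G.Walk u v, (∀ z ∈ q.support, z ∈ s) ∧
      ∀ q' : G.Walk u v, (∀ z ∈ q'.support, z ∈ s) → q.length ≤ q'.length := by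
    obtain ⟨q, hq, hmin⟩ := WellFounded.has_min (measure fun q : G.Walk u v ↦ q.length).wf
      {q | ∀ z ∈ q.support, z ∈ s} ⟨p, hps⟩
    exact ⟨q, hq, fun q' hq' ↦ not_lt.mp (hmin q' hq')⟩
  have hbs : ∀ z ∈ q.bypass.support, z ∈ s := fun z hz ↦ hqs z (support_bypass_subset_support _ hz)
  refine ⟨q.bypass, bypass_isPath _, isChordless_of_forall_length_le hbs fun q' hq' ↦ ?_, hbs⟩
  exact (length_bypass_le_length q).trans (hmin q' hq')

lemma two_le_length_of_not_adj (p : G.Walk u v) (huv : u ≠ v) (hadj : ¬G.Adj u v) :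
    2 ≤ p.length := by
  by_contra! h
  interval_cases hp : p.length
  · exact huv (eq_of_length_eq_zero hp)
  · exact hadj (adj_of_length_eq_one hp)

lemma IsPath.start_notMem_support_tail {p : G.Walk u v} (hp : p.IsPath) :
    u ∉ p.support.tail := by
  have := hp.support_nodup
  rw [← p.cons_tail_support, List.nodup_cons] at this
  exact this.1

end Walk

def ReachableIn (G : SimpleGraph V) (s : Set V) (u v : V) : Prop :=
  ∃ p : G.Walk u v, ∀ z ∈ p.support, z ∈ s

lemma ReachableIn.refl (hu : u ∈ s) : G.ReachableIn s u u :=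
  ⟨.nil, by simpa using hu⟩

lemma ReachableIn.symm (h : G.ReachableIn s u v) : G.ReachableIn s v u := by
  obtain ⟨p, hp⟩ := h
  exact ⟨p.reverse, by simpa using hp⟩

lemma ReachableIn.trans (h : G.ReachableIn s u v) (h' : G.ReachableIn s v w) :
    G.ReachableIn s u w := by
  obtain ⟨p, hp⟩ := h
  obtain ⟨q, hq⟩ := h'
  exact ⟨p.append q, fun z hz ↦ (Walk.mem_support_append_iff p q).mp hz |>.elim (hp z) (hq z)⟩

lemma ReachableIn.mono (h : G.ReachableIn s u v) (hst : s ⊆ t) : G.ReachableIn t u v := by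
  obtain ⟨p, hp⟩ := h
  exact ⟨p, fun z hz ↦ hst (hp z hz)⟩

lemma ReachableIn.mem_right (h : G.ReachableIn s u v) : v ∈ s := by
  obtain ⟨p, hp⟩ := h
  exact hp v p.end_mem_support

lemma Adj.reachableIn (h : G.Adj u v) (hu : u ∈ s) (hv : v ∈ s) : G.ReachableIn s u v :=
  ⟨h.toWalk, by simp [hu, hv]⟩

lemma ReachableIn.mem_of_closed (h : G.ReachableIn s u v) (hu : u ∈ C)
    (hC : ∀ x ∈ C, ∀ y ∈ s, G.Adj x y → y ∈ C) : v ∈ C := by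
  obtain ⟨p, hp⟩ := h
  induction p with
  | nil => exact hu
  | cons hadj p ih =>
    exact ih (hC _ hu _ (hp _ (by simp)) hadj) fun z hz ↦ hp z (by simp [hz])

def componentIn (G : SimpleGraph V) (s : Set V) (a : V) : Set V :=
  {z | G.ReachableIn s a z}

lemma componentIn_subset : G.componentIn s a ⊆ s := fun _ h ↦ ReachableIn.mem_right h

lemma mem_componentIn_of_adj (hx : x ∈ G.componentIn s a) (hy : y ∈ s) (h : G.Adj x y) :
    y ∈ G.componentIn s a :=
  ReachableIn.trans hx (h.reachableIn (componentIn_subset hx) hy)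

lemma reachableIn_componentIn (hx : x ∈ G.componentIn s a)
    (hy : y ∈ G.componentIn s a) : G.ReachableIn (G.componentIn s a) x y := by
  classical
  have from_a : ∀ z ∈ G.componentIn s a, G.ReachableIn (G.componentIn s a) a z := by
    rintro z ⟨p, hp⟩
    exact ⟨p, fun w hw ↦ ⟨p.takeUntil w hw, fun z hz ↦
      hp z (p.support_takeUntil_subset_support hw hz)⟩⟩
  exact (from_a x hx).symm.trans (from_a y hy)

structure IsFullComponent (G : SimpleGraph V) (U S X : Set V) : Prop where
  subset : X ⊆ U \ S
  mem_of_adj : ∀ x ∈ X, ∀ z ∈ U, G.Adj x z → z ∈ X ∪ S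
  reachableIn : ∀ x ∈ X, ∀ y ∈ X, G.ReachableIn X x y
  exists_adj : ∀ s ∈ S, ∃ x ∈ X, G.Adj s x

lemma exists_isFullComponent_pair (ha : a ∈ U) (hb : b ∈ U) (hab : a ≠ b) (hnadj : ¬G.Adj a b) :
    ∃ S X Y, S ⊆ U ∧ G.IsFullComponent U S X ∧ G.IsFullComponent U S Y ∧ Disjoint X Y ∧
      a ∈ X ∧ b ∈ Y := by
  set D := U \ insert a (G.neighborSet a)
  set Y := G.componentIn D b
  set S := {s | s ∈ U ∧ s ∉ Y ∧ ∃ y ∈ Y, G.Adj s y}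
  set X := G.componentIn (U \ S) a
  have hYD : Y ⊆ D := componentIn_subset
  have hbY : b ∈ Y := ReachableIn.refl ⟨hb, by simp [hab.symm, hnadj]⟩
  have hSa : S ⊆ G.neighborSet a := by
    rintro s ⟨hsU, hsY, y, hyY, hsy⟩
    have hs : s ∈ insert a (G.neighborSet a) := by
      by_contra hs
      exact hsY (mem_componentIn_of_adj hyY ⟨hsU, hs⟩ hsy.symm)
    rcases hs with rfl | hs
    · exact absurd (Set.mem_insert_of_mem _ hsy) (hYD hyY).2
    · exact hs
  have haX : a ∈ X := ReachableIn.refl ⟨ha, fun h ↦ G.irrefl (hSa h)⟩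
  have hYS : ∀ y ∈ Y, ∀ z ∈ U, G.Adj y z → z ∈ Y ∪ S := fun y hy z hz h ↦
    or_iff_not_imp_left.mpr fun hzY ↦ ⟨hz, hzY, y, hy, h.symm⟩
  refine ⟨S, X, Y, fun s hs ↦ hs.1, ⟨componentIn_subset, ?_, ?_, ?_⟩,
    ⟨fun y hy ↦ ⟨(hYD hy).1, fun hS ↦ hS.2.1 hy⟩, hYS, ?_, fun s hs ↦ hs.2.2⟩,
    Set.disjoint_left.mpr ?_, haX, hbY⟩
  · exact fun x hx z hz h ↦ or_iff_not_imp_right.mpr fun hzS ↦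
      mem_componentIn_of_adj hx ⟨hz, hzS⟩ h
  · exact fun x hx y hy ↦ reachableIn_componentIn hx hy
  · exact fun s hs ↦ ⟨a, haX, (hSa hs).symm⟩
  · exact fun y hy z hz ↦ reachableIn_componentIn hy hz
  · intro z hzX hzY
    have haY : a ∈ Y := ReachableIn.symm hzX |>.mem_of_closed hzY fun y hy w hw h ↦
      (hYS y hy w hw.1 h).resolve_right hw.2
    exact (hYD haY).2 (Set.mem_insert a _)

lemma IsFullComponent.exists_isPath_isChordless (hX : G.IsFullComponent U S X) (hx : x ∈ S)
    (hy : y ∈ S) : ∃ p : G.Walk x y, p.IsPath ∧ p.IsChordless ∧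
      ∀ z ∈ p.support, z ∈ insert x (insert y X) := by
  obtain ⟨x', hx'X, hxx'⟩ := hX.exists_adj x hx
  obtain ⟨y', hy'X, hyy'⟩ := hX.exists_adj y hy
  have hXsub : X ⊆ insert x (insert y X) := fun z hz ↦ .inr (.inr hz)
  obtain ⟨p, hp⟩ : G.ReachableIn (insert x (insert y X)) x y :=
    ((hxx'.reachableIn (.inl rfl) (hXsub hx'X)).trans
      ((hX.reachableIn x' hx'X y' hy'X).mono hXsub)).trans
      (hyy'.symm.reachableIn (hXsub hy'X) (.inr (.inl rfl)))
  exact p.exists_isPath_isChordless_of_support_subset hp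

def IsSimplicialIn (G : SimpleGraph V) (U : Set V) (v : V) : Prop :=
  G.IsClique (G.neighborSet v ∩ U)

lemma IsFullComponent.exists_isSimplicialIn (hX : G.IsFullComponent U S X) (hS : G.IsClique S)
    (ha : a ∈ X) (h : G.IsClique (X ∪ S) ∨ ∃ u ∈ X ∪ S, ∃ w ∈ X ∪ S, u ≠ w ∧ ¬G.Adj u w ∧
      G.IsSimplicialIn (X ∪ S) u ∧ G.IsSimplicialIn (X ∪ S) w) :
    ∃ x ∈ X, G.IsSimplicialIn U x := by
  have hlift : ∀ x ∈ X, G.IsSimplicialIn (X ∪ S) x → G.IsSimplicialIn U x :=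
    fun x hx ↦ IsClique.subset fun z hz ↦ ⟨hz.1, hX.mem_of_adj x hx z hz.2 hz.1⟩
  rcases h with hcl | ⟨u, hu | hu, w, hw | hw, huw, hnadj, hsu, hsw⟩
  · exact ⟨a, ha, hlift a ha (hcl.subset Set.inter_subset_right)⟩
  · exact ⟨u, hu, hlift u hu hsu⟩
  · exact ⟨u, hu, hlift u hu hsu⟩
  · exact ⟨w, hw, hlift w hw hsw⟩
  · exact absurd (hS hu hw huw) hnadj

lemma IsFullComponent.union_ssubset (hX : G.IsFullComponent U S X) (hSU : S ⊆ U)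
    (hY : G.IsFullComponent U S Y) (hXY : Disjoint X Y) (hb : b ∈ Y) : X ∪ S ⊂ U :=
  (Set.ssubset_iff_of_subset (Set.union_subset (fun _ hx ↦ (hX.subset hx).1) hSU)).mpr
    ⟨b, (hY.subset hb).1, fun h ↦ h.elim (Set.disjoint_left.mp hXY · hb) (hY.subset hb).2⟩

def maximalCliquesIn (G : SimpleGraph V) (U : Set V) : Set (Set V) :=
  {C | Maximal (fun C ↦ G.IsClique C ∧ C ⊆ U) C}

lemma mem_maximalCliquesIn :
    C ∈ G.maximalCliquesIn U ↔ Maximal (fun C ↦ G.IsClique C ∧ C ⊆ U) C := Iff.rfl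

lemma maximalCliquesIn_univ : G.maximalCliquesIn Set.univ =
    {C | G.IsClique C ∧ ∀ C' : Set V, G.IsClique C' → C ⊆ C' → C = C'} := by
  ext C
  simp only [mem_maximalCliquesIn, Set.subset_univ, and_true, Set.mem_ofPred_eq]
  exact ⟨fun h ↦ ⟨h.prop, fun _ hC' hCC' ↦ h.eq_of_subset hC' hCC'⟩,
    fun h ↦ ⟨h.1, fun C' hC' hCC' ↦ (h.2 C' hC' hCC').ge⟩⟩

lemma subset_insert_neighborSet_inter (hK : G.IsClique K) (hKU : K ⊆ U) (hvK : v ∈ K) :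
    K ⊆ insert v (G.neighborSet v ∩ U) := by
  intro z hz
  by_cases hzv : z = v
  · exact .inl hzv
  · exact .inr ⟨hK hvK hz (Ne.symm hzv), hKU hz⟩

lemma sdiff_singleton_mem_maximalCliquesIn (hC : C ∈ G.maximalCliquesIn U) (hvC : v ∉ C) :
    C ∈ G.maximalCliquesIn (U \ {v}) :=
  ⟨⟨hC.1.1, Set.subset_sdiff_singleton hC.1.2 hvC⟩,
    fun _ hD hCD ↦ hC.2 ⟨hD.1, hD.2.trans Set.sdiff_subset⟩ hCD⟩

namespace IsSimplicialIn

lemma isClique_insert (hv : G.IsSimplicialIn U v) :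
    G.IsClique (insert v (G.neighborSet v ∩ U)) :=
  IsClique.insert hv fun _ hb _ ↦ hb.1

lemma eq_insert_of_mem_maximalCliquesIn (hv : G.IsSimplicialIn U v) (hvU : v ∈ U)
    (hC : C ∈ G.maximalCliquesIn U) (hvC : v ∈ C) : C = insert v (G.neighborSet v ∩ U) :=
  (mem_maximalCliquesIn.mp hC).eq_of_subset
    ⟨hv.isClique_insert, Set.insert_subset hvU Set.inter_subset_right⟩
    (subset_insert_neighborSet_inter hC.1.1 hC.1.2 hvC)

lemma neighborSet_inter_notMem_maximalCliquesIn (hv : G.IsSimplicialIn U v) (hvU : v ∈ U) :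
    G.neighborSet v ∩ U ∉ G.maximalCliquesIn U := fun hN ↦
  G.irrefl ((mem_maximalCliquesIn.mp hN).eq_of_subset
    ⟨hv.isClique_insert, Set.insert_subset hvU Set.inter_subset_right⟩
    (Set.subset_insert _ _) ▸ Set.mem_insert v _).1

lemma ncard_maximalCliquesIn_le [Finite V] (hv : G.IsSimplicialIn U v) (hvU : v ∈ U)
    (hN : G.neighborSet v ∩ U ∈ G.maximalCliquesIn (U \ {v})) :
    (G.maximalCliquesIn U).ncard ≤ (G.maximalCliquesIn (U \ {v})).ncard := by
  have hvN : v ∉ G.neighborSet v ∩ U := fun h ↦ G.irrefl h.1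
  have hmem : ∀ C ∈ G.maximalCliquesIn U, (v ∈ C ↔ C \ {v} = G.neighborSet v ∩ U) := by
    refine fun C hC ↦ ⟨fun hvC ↦ ?_, fun h ↦ by_contra fun hvC ↦ ?_⟩
    · rw [hv.eq_insert_of_mem_maximalCliquesIn hvU hC hvC, Set.insert_sdiff_self_of_notMem hvN]
    · rw [Set.sdiff_singleton_eq_self hvC] at h
      exact hv.neighborSet_inter_notMem_maximalCliquesIn hvU (h ▸ hC)
  refine Set.ncard_le_ncard_of_injOn (· \ {v}) (fun C hC ↦ ?_)
    fun C₁ hC₁ C₂ hC₂ (h : C₁ \ {v} = C₂ \ {v}) ↦ ?_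
  · by_cases hvC : v ∈ C
    · exact (hmem C hC).mp hvC ▸ hN
    · rw [Set.sdiff_singleton_eq_self hvC]
      exact sdiff_singleton_mem_maximalCliquesIn hC hvC
  · by_cases hvC₁ : v ∈ C₁
    · have hvC₂ : v ∈ C₂ := (hmem C₂ hC₂).mpr (h ▸ (hmem C₁ hC₁).mp hvC₁)
      rw [hv.eq_insert_of_mem_maximalCliquesIn hvU hC₁ hvC₁,
        hv.eq_insert_of_mem_maximalCliquesIn hvU hC₂ hvC₂]
    · have hvC₂ : v ∉ C₂ := fun hvC₂ ↦ hvC₁ ((hmem C₁ hC₁).mpr (h ▸ (hmem C₂ hC₂).mp hvC₂))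
      simpa only [Set.sdiff_singleton_eq_self hvC₁, Set.sdiff_singleton_eq_self hvC₂] using h

lemma ncard_maximalCliquesIn_le_succ [Finite V] (hv : G.IsSimplicialIn U v) (hvU : v ∈ U) :
    (G.maximalCliquesIn U).ncard ≤ (G.maximalCliquesIn (U \ {v})).ncard + 1 := by
  refine (Set.ncard_le_ncard fun C hC ↦ ?_).trans (Set.ncard_insert_le
    (insert v (G.neighborSet v ∩ U)) _)
  by_cases hvC : v ∈ C
  · exact .inl (hv.eq_insert_of_mem_maximalCliquesIn hvU hC hvC)
  · exact .inr (sdiff_singleton_mem_maximalCliquesIn hC hvC)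

lemma exists_isClique_ncard_le [Finite V] (hv : G.IsSimplicialIn U v)
    (hN : G.neighborSet v ∩ U ∉ G.maximalCliquesIn (U \ {v})) (hK : G.IsClique K)
    (hKU : K ⊆ U) : ∃ K', G.IsClique K' ∧ K' ⊆ U \ {v} ∧ K.ncard ≤ K'.ncard := by
  by_cases hvK : v ∉ K
  · exact ⟨K, hK, Set.subset_sdiff_singleton hKU hvK, le_rfl⟩
  rw [not_not] at hvK
  have hvN : v ∉ G.neighborSet v ∩ U := fun h ↦ G.irrefl h.1
  rw [mem_maximalCliquesIn] at hN
  obtain ⟨K', hNK', hK', hK'U⟩ := (not_maximal_subset_iff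
    ⟨hv, Set.subset_sdiff_singleton Set.inter_subset_right hvN⟩).mp hN
  refine ⟨K', hK', hK'U, ?_⟩
  calc K.ncard ≤ (insert v (G.neighborSet v ∩ U)).ncard :=
        Set.ncard_le_ncard (subset_insert_neighborSet_inter hK hKU hvK)
    _ ≤ (G.neighborSet v ∩ U).ncard + 1 := Set.ncard_insert_le _ _
    _ ≤ K'.ncard := Set.ncard_lt_ncard hNK'

end IsSimplicialIn

end SimpleGraph

namespace Chordal

open SimpleGraph

variable {V : Type*} {G : SimpleGraph V} {U S X Y : Set V} {v : V}

lemma length_lt_four {c : G.Walk v v} (hG : Chordal G) (hc : c.IsCycle)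
    (hcl : c.IsChordless) : c.length < 4 := by
  by_contra! h
  exact (hG _ h).false (hc.cycleGraph_isIndContained hcl).some

lemma isClique_of_isFullComponent (hG : Chordal G) (hX : G.IsFullComponent U S X)
    (hY : G.IsFullComponent U S Y) (hXY : Disjoint X Y) : G.IsClique S := by
  intro x hx y hy hxy
  by_contra hn
  obtain ⟨p, hp, hpc, hps⟩ := hX.exists_isPath_isChordless hx hy
  obtain ⟨q, hq, hqc, hqs⟩ := hY.exists_isPath_isChordless hy hx
  have hcross : ∀ a ∈ p.support, ∀ b ∈ q.support, G.Adj a b →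
      a ∈ q.support ∨ b ∈ p.support := by
    intro a ha b hb h
    rcases hps a ha with rfl | rfl | haX
    · exact .inl q.end_mem_support
    · exact .inl q.start_mem_support
    rcases hqs b hb with rfl | rfl | hbY
    · exact .inr p.end_mem_support
    · exact .inr p.start_mem_support
    rcases hX.mem_of_adj a haX b (hY.subset hbY).1 h with hbX | hbS
    · exact absurd hbY (Set.disjoint_left.mp hXY hbX)
    · exact absurd hbS (hY.subset hbY).2
  have hdisj : p.support.tail.Disjoint q.support.tail := by
    intro z hzp hzq
    have hzx : z ≠ x := fun h ↦ hp.start_notMem_support_tail (h ▸ hzp)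
    have hzy : z ≠ y := fun h ↦ hq.start_notMem_support_tail (h ▸ hzq)
    rcases hps z (List.mem_of_mem_tail hzp) with h | h | hzX
    · exact hzx h
    · exact hzy h
    rcases hqs z (List.mem_of_mem_tail hzq) with h | h | hzY
    · exact hzy h
    · exact hzx h
    exact Set.disjoint_left.mp hXY hzX hzY
  have hp2 := p.two_le_length_of_not_adj hxy hn
  have hq2 := q.two_le_length_of_not_adj hxy.symm fun h ↦ hn h.symm
  have := hG.length_lt_four (hp.isCycle_append hq hdisj (.inl (by omega))) (hpc.append hqc hcross)
  rw [Walk.length_append] at this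
  omega

theorem isClique_or_exists_isSimplicialIn [Finite V] (hG : Chordal G) (U : Set V) :
    G.IsClique U ∨ ∃ u ∈ U, ∃ w ∈ U, u ≠ w ∧ ¬G.Adj u w ∧
      G.IsSimplicialIn U u ∧ G.IsSimplicialIn U w := by
  induction U using WellFoundedLT.induction with
  | _ U ih =>
  by_cases hU : G.IsClique U
  · exact .inl hU
  right
  obtain ⟨a, ha, b, hb, hab, hnadj⟩ : ∃ a ∈ U, ∃ b ∈ U, a ≠ b ∧ ¬G.Adj a b := by
    simpa [IsClique, Set.Pairwise] using hU
  obtain ⟨S, X, Y, hSU, hX, hY, hXY, haX, hbY⟩ := exists_isFullComponent_pair ha hb hab hnadj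
  have hS := hG.isClique_of_isFullComponent hX hY hXY
  obtain ⟨u, huX, hu⟩ :=
    hX.exists_isSimplicialIn hS haX (ih _ (hX.union_ssubset hSU hY hXY hbY))
  obtain ⟨w, hwY, hw⟩ :=
    hY.exists_isSimplicialIn hS hbY (ih _ (hY.union_ssubset hSU hX hXY.symm haX))
  refine ⟨u, (hX.subset huX).1, w, (hY.subset hwY).1, ?_, fun h ↦ ?_, hu, hw⟩
  · rintro rfl
    exact Set.disjoint_left.mp hXY huX hwY
  · rcases hX.mem_of_adj u huX w (hY.subset hwY).1 h with hwX | hwS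
    · exact Set.disjoint_left.mp hXY hwX hwY
    · exact (hY.subset hwY).2 hwS

lemma exists_isSimplicialIn [Finite V] (hG : Chordal G) (hU : U.Nonempty) :
    ∃ v ∈ U, G.IsSimplicialIn U v := by
  rcases hG.isClique_or_exists_isSimplicialIn U with hcl | ⟨u, hu, -, -, -, -, hs, -⟩
  · obtain ⟨v, hv⟩ := hU
    exact ⟨v, hv, hcl.subset Set.inter_subset_right⟩
  · exact ⟨u, hu, hs⟩

theorem ncard_add_ncard_maximalCliquesIn_le [Finite V] (hG : Chordal G) (U : Set V)
    {K : Set V} (hK : G.IsClique K) (hKU : K ⊆ U) :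
    K.ncard + (G.maximalCliquesIn U).ncard ≤ U.ncard + 1 := by
  induction U using WellFoundedLT.induction generalizing K with
  | _ U ih =>
  rcases U.eq_empty_or_nonempty with rfl | hU
  · have hmax : G.maximalCliquesIn ∅ ⊆ {∅} := fun C hC ↦ Set.subset_empty_iff.mp hC.1.2
    rw [Set.subset_empty_iff.mp hKU]
    simpa using Set.ncard_le_ncard hmax
  obtain ⟨v, hvU, hv⟩ := hG.exists_isSimplicialIn hU
  have ih' {K : Set V} := ih (U \ {v}) (Set.sdiff_singleton_ssubset.mpr hvU) (K := K)
  have hU' : (U \ {v}).ncard + 1 = U.ncard := Set.ncard_sdiff_singleton_add_one hvU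
  by_cases hN : G.neighborSet v ∩ U ∈ G.maximalCliquesIn (U \ {v})
  · have hmax := hv.ncard_maximalCliquesIn_le hvU hN
    have hKv : K.ncard ≤ (K \ {v}).ncard + 1 := by
      simpa using Set.ncard_le_ncard_sdiff_add_ncard K {v}
    have := ih' (hK.subset Set.sdiff_subset) (Set.sdiff_subset_sdiff_left hKU)
    omega
  · obtain ⟨K', hK', hK'U, hKK'⟩ := hv.exists_isClique_ncard_le hN hK hKU
    have hmax := hv.ncard_maximalCliquesIn_le_succ hvU
    have := ih' hK' hK'U
    omega

end Chordal

/-- In a finite chordal graph on n vertices with maximum clique size ω and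
set of maximal cliques 𝒞, one has n − |𝒞| ≥ ω − 1. -/
theorem stmt4 {V : Type*} [Fintype V] (G : SimpleGraph V) (hch : Chordal G)
    (ω : ℕ) (hω : IsGreatest {k : ℕ | ∃ s : Finset V, G.IsNClique k s} ω) :
    ω - 1 ≤ Fintype.card V -
      {C : Set V | G.IsClique C ∧ ∀ C' : Set V, G.IsClique C' → C ⊆ C' → C = C'}.ncard := by
  obtain ⟨K, hK⟩ := hω.1
  have := hch.ncard_add_ncard_maximalCliquesIn_le Set.univ hK.isClique (Set.subset_univ _)
  rw [Set.ncard_coe_finset, hK.card_eq, Set.ncard_univ, Nat.card_eq_fintype_card,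
    SimpleGraph.maximalCliquesIn_univ] at this
  omega
end

section
/- Any topological ordering of a finite DAG D without v-structures is a perfect elimination ordering of the skeleton of D. -/
/-- A directed graph (given by its adjacency relation) is a DAG if it has no directed cycles. -/
def IsDAG {V : Type*} (adj : V → V → Prop) : Prop := ∀ v : V, ¬ Relation.TransGen adj v v

/-- Skeleton adjacency: forget edge directions. -/
def Skel {V : Type*} (adj : V → V → Prop) (u v : V) : Prop := adj u v ∨ adj v u

/-- A clique in the skeleton: pairwise adjacent set of vertices. -/
def IsClique {V : Type*} (adj : V → V → Prop) (C : Set V) : Prop :=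
  ∀ ⦃u⦄, u ∈ C → ∀ ⦃v⦄, v ∈ C → u ≠ v → Skel adj u v

/-- A maximal clique of the skeleton. -/
def IsMaxClique {V : Type*} (adj : V → V → Prop) (C : Set V) : Prop :=
  IsClique adj C ∧ ∀ C' : Set V, IsClique adj C' → C ⊆ C' → C = C'

/-- No v-structures: any two distinct parents of a common vertex are adjacent in the skeleton. -/
def NoVStruct {V : Type*} (adj : V → V → Prop) : Prop :=
  ∀ a b c : V, adj b a → adj c a → b ≠ c → Skel adj b c

/-- Any topological ordering of a finite DAG without v-structures is a perfect
elimination ordering of its skeleton: for every vertex v, the skeleton-neighbors of v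
occurring earlier in the ordering form a clique. -/
theorem stmt5 {V : Type*} [Fintype V] (adj : V → V → Prop)
    (hdag : IsDAG adj) (hnv : NoVStruct adj)
    (σ : V ≃ Fin (Fintype.card V)) (htop : ∀ a b : V, adj a b → σ a < σ b) (v : V) :
    IsClique adj {u | Skel adj u v ∧ σ u < σ v} := by
  intro a ha b hb hab
  have hav : adj a v := by
    rcases ha.1 with h | h
    · exact h
    · exact absurd (htop v a h) (not_lt.2 ha.2.le)
  have hbv : adj b v := by
    rcases hb.1 with h | h
    · exact h
    · exact absurd (htop v b h) (not_lt.2 hb.2.le)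
  exact hnv v a b hav hbv hab
end

section
/- Let D be a finite DAG without v-structures with vertex set V. Then there exists a maximal clique C of the skeleton of D such that for every vertex u ∈ C, all parents of u in D are also in C (equivalently, no edge of D goes from V \ C into C). -/
private lemma two_pow_sum_lt' (n : ℕ) : ∑ j ∈ Finset.range n, 2 ^ j < 2 ^ n := by
  induction n with
  | zero => simp
  | succ n ih => rw [Finset.sum_range_succ, pow_succ]; omega

/-- Every finite DAG without v-structures has a maximal clique C of its skeleton
such that no edge of D goes from outside C into C. -/
theorem stmt8 {V : Type*} [Fintype V] (adj : V → V → Prop)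
    (hdag : IsDAG adj) (hnv : NoVStruct adj) :
    ∃ C : Set V, IsMaxClique adj C ∧ ∀ u ∈ C, ∀ w : V, adj w u → w ∈ C := by
  classical
  -- Step 1: an injective "topological" weighting f : V → ℕ with adj a b → f a < f b.
  obtain ⟨f, hinj, hmono⟩ : ∃ f : V → ℕ, Function.Injective f ∧ ∀ a b, adj a b → f a < f b := by
    set n := Fintype.card V with hn
    set g : V → ℕ := fun v => (Fintype.equivFin V v : ℕ) with hg
    have hgn : ∀ v, g v < n := fun v => (Fintype.equivFin V v).isLt
    have hginj : Function.Injective g := fun a b h =>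
      (Fintype.equivFin V).injective (Fin.ext h)
    set p : V → ℕ := fun v =>
      (Finset.univ.filter (fun x => Relation.TransGen adj x v)).card with hp
    have hpm : ∀ a b, adj a b → p a < p b := by
      intro a b hab
      apply Finset.card_lt_card
      constructor
      · intro x hx
        simp only [Finset.mem_filter, Finset.mem_univ, true_and] at *
        exact hx.tail hab
      · intro hsub
        have ha : a ∈ Finset.univ.filter (fun x => Relation.TransGen adj x b) := by
          simp [Relation.TransGen.single hab]
        have := hsub ha
        simp only [Finset.mem_filter, Finset.mem_univ, true_and] at this
        exact hdag a this
    refine ⟨fun v => n * p v + g v, ?_, ?_⟩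
    · intro a b h
      have hga := hgn a
      have hgb := hgn b
      have h1 := Nat.mul_add_mod n (p a) (g a)
      have h2 := Nat.mul_add_mod n (p b) (g b)
      rw [Nat.mod_eq_of_lt hga] at h1
      rw [Nat.mod_eq_of_lt hgb] at h2
      have h' : n * p a + g a = n * p b + g b := h
      rw [h', h2] at h1
      exact hginj h1.symm
    · intro a b hab
      have hpab := hpm a b hab
      have hga := hgn a
      calc n * p a + g a < n * p a + n := by omega
        _ = n * (p a + 1) := by ring
        _ ≤ n * p b := Nat.mul_le_mul_left n hpab
        _ ≤ n * p b + g b := Nat.le_add_right _ _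
  -- Step 2: weights 2^(N - f v), heavily favoring small f.
  set N := Finset.univ.sup f with hN
  have hfN : ∀ v, f v ≤ N := fun v => Finset.le_sup (Finset.mem_univ v)
  set wt : V → ℕ := fun v => 2 ^ (N - f v) with hwt
  -- Step 3: pick a clique (as a Finset) maximizing total weight.
  obtain ⟨F, hFmem, hFmax⟩ := Finset.exists_max_image
    (Finset.univ.filter (fun F : Finset V => IsClique adj ↑F))
    (fun F => ∑ v ∈ F, wt v)
    ⟨∅, by
      simp only [Finset.mem_filter, Finset.mem_univ, true_and]
      intro u hu
      simp at hu⟩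
  have hFclique : IsClique adj ↑F := (Finset.mem_filter.mp hFmem).2
  have hFmax' : ∀ F' : Finset V, IsClique adj ↑F' → (∑ v ∈ F', wt v) ≤ ∑ v ∈ F, wt v := by
    intro F' h
    exact hFmax F' (by simp [h])
  refine ⟨↑F, ⟨hFclique, ?_⟩, ?_⟩
  · -- Maximality of the clique.
    intro C' hC' hsub
    by_contra hne
    have : ∃ v ∈ C', v ∉ F := by
      by_contra h
      push_neg at h
      exact hne (Set.Subset.antisymm hsub (fun v hv => h v hv))
    obtain ⟨v, hvC, hvF⟩ := this
    have hclique' : IsClique adj ↑(insert v F) := by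
      intro a ha b hb hab
      simp only [Finset.coe_insert, Set.mem_insert_iff, Finset.mem_coe] at ha hb
      have haC : a ∈ C' := by
        rcases ha with rfl | ha
        · exact hvC
        · exact hsub ha
      have hbC : b ∈ C' := by
        rcases hb with rfl | hb
        · exact hvC
        · exact hsub hb
      exact hC' haC hbC hab
    have hle := hFmax' _ hclique'
    rw [Finset.sum_insert hvF] at hle
    have hwpos : 0 < wt v := pow_pos (by norm_num) _
    omega
  · -- Parent closure.
    intro u hu w hwu
    by_contra hwF
    have huF : u ∈ F := hu
    have hwF' : w ∉ F := hwF
    have key : ∀ x ∈ F, ¬ Skel adj w x → f w < f x := by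
      intro x hx hnsk
      have hxu : x ≠ u := by
        rintro rfl
        exact hnsk (Or.inl hwu)
      have hsk : Skel adj x u := hFclique hx huF hxu
      rcases hsk with hxu' | hux
      · exfalso
        have hxw : x ≠ w := by
          rintro rfl
          exact hwF' hx
        have hskxw : Skel adj x w := hnv u x w hxu' hwu hxw
        exact hnsk (Or.symm hskxw)
      · have h1 := hmono w u hwu
        have h2 := hmono u x hux
        omega
    set B := F.filter (fun x => ¬ Skel adj w x) with hB
    have hfwN : f w ≤ N := hfN w
    have hBsum : (∑ x ∈ B, wt x) < wt w := by
      have hinjB : ∀ x ∈ B, ∀ y ∈ B, N - f x = N - f y → x = y := by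
        intro x hx y hy h
        have hx' := hfN x
        have hy' := hfN y
        exact hinj (by omega)
      have heq : ∑ j ∈ B.image (fun x => N - f x), 2 ^ j = ∑ x ∈ B, wt x :=
        Finset.sum_image hinjB
      rw [← heq]
      calc ∑ j ∈ B.image (fun x => N - f x), 2 ^ j
          ≤ ∑ j ∈ Finset.range (N - f w), 2 ^ j := by
            apply Finset.sum_le_sum_of_subset
            intro j hj
            simp only [Finset.mem_image] at hj
            obtain ⟨x, hx, rfl⟩ := hj
            obtain ⟨hxF, hxnsk⟩ := Finset.mem_filter.mp hx
            have hfx := key x hxF hxnsk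
            have hxN := hfN x
            simp only [Finset.mem_range]
            omega
        _ < 2 ^ (N - f w) := two_pow_sum_lt' _
    set G := F.filter (fun x => Skel adj w x) with hG
    have hwG : w ∉ G := fun h => hwF' (Finset.mem_of_mem_filter w h)
    have hclique' : IsClique adj ↑(insert w G) := by
      intro a ha b hb hab
      simp only [Finset.coe_insert, Set.mem_insert_iff, Finset.mem_coe, hG,
        Finset.mem_filter] at ha hb
      rcases ha with rfl | ⟨haF, hska⟩
      · rcases hb with rfl | ⟨hbF, hskb⟩
        · exact absurd rfl hab
        · exact hskb
      · rcases hb with rfl | ⟨hbF, hskb⟩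
        · exact Or.symm hska
        · exact hFclique haF hbF hab
    have hsplit : (∑ x ∈ G, wt x) + (∑ x ∈ B, wt x) = ∑ v ∈ F, wt v :=
      Finset.sum_filter_add_sum_filter_not F _ wt
    have hins : (∑ v ∈ insert w G, wt v) = wt w + ∑ v ∈ G, wt v :=
      Finset.sum_insert hwG
    have hle := hFmax' _ hclique'
    omega
end

section
/- Let D be a finite DAG without v-structures and let C be a maximal clique of the skeleton of D such that no edge of D goes from outside C into C. Then every sink vertex of the induced DAG D[V \ C] is also a sink vertex of D, and the sink vertex of C is the only sink vertex of D not belonging to V \ C. -/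
/-- A clique contained in a vertex subset S. -/
def IsCliqueOn {V : Type*} (adj : V → V → Prop) (S C : Set V) : Prop :=
  C ⊆ S ∧ IsClique adj C

/-- A maximal clique of the subgraph induced on S. -/
def IsMaxCliqueOn {V : Type*} (adj : V → V → Prop) (S C : Set V) : Prop :=
  IsCliqueOn adj S C ∧ ∀ C' : Set V, IsCliqueOn adj S C' → C ⊆ C' → C = C'

/-- A sink vertex of the sub-DAG induced on S : a vertex s ∈ S such that
{s} ∪ parents(s) (parents taken inside S) is a maximal clique of the induced skeleton. -/
def IsSinkOn {V : Type*} (adj : V → V → Prop) (S : Set V) (s : V) : Prop :=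
  s ∈ S ∧ IsMaxCliqueOn adj S (insert s {u | u ∈ S ∧ adj u s})

/-- A sink vertex of the DAG: {s} ∪ parents(s) is a maximal clique of the skeleton. -/
def IsSink {V : Type*} (adj : V → V → Prop) (s : V) : Prop :=
  IsMaxClique adj (insert s {u | adj u s})


lemma clique_insert' {V : Type*} {adj : V → V → Prop} {K : Set V} {x : V}
    (hK : IsClique adj K) (hx : ∀ b ∈ K, b ≠ x → Skel adj x b) :
    IsClique adj (insert x K) := by
  intro a ha b hb hne
  rcases ha with rfl | ha
  · rcases hb with rfl | hb
    · exact absurd rfl hne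
    · exact hx b hb (Ne.symm hne)
  · rcases hb with rfl | hb
    · exact (hx a ha hne).symm
    · exact hK ha hb hne

/-- If C is a maximal clique of the skeleton of a finite DAG D without v-structures
such that no edge of D enters C from outside, then every sink vertex of the induced DAG
D[V \ C] is a sink vertex of D, and the sink vertex of C is the only sink vertex of D
not belonging to V \ C. -/
theorem stmt9 {V : Type*} [Fintype V] (adj : V → V → Prop)
    (hdag : IsDAG adj) (hnv : NoVStruct adj)
    (C : Set V) (hC : IsMaxClique adj C)
    (hclosed : ∀ u ∈ C, ∀ w : V, adj w u → w ∈ C)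
    (v : V) (hv : C = insert v {u | adj u v}) :
    (∀ s : V, IsSinkOn adj Cᶜ s → IsSink adj s) ∧
    IsSink adj v ∧
    (∀ s : V, IsSink adj s → s ∉ Cᶜ → s = v) := by
  have hvC : v ∈ C := by rw [hv]; exact Set.mem_insert _ _
  have no2 : ∀ a b : V, adj a b → adj b a → False := fun a b h1 h2 =>
    hdag a (Relation.TransGen.head h1 (Relation.TransGen.single h2))
  have hcl : ∀ s : V, IsClique adj (insert s {u | adj u s}) := by
    intro s u hu w hw hne
    rcases hu with rfl | hu
    · rcases hw with rfl | hw
      · exact absurd rfl hne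
      · exact Or.inr hw
    · rcases hw with rfl | hw
      · exact Or.inl hu
      · exact hnv s u w hu hw hne
  refine ⟨?_, ?_, ?_⟩
  · rintro s ⟨hs, ⟨⟨hsub', hclq'⟩, hmax'⟩⟩
    refine ⟨hcl s, ?_⟩
    intro C' hC' hsubC'
    refine Set.Subset.antisymm hsubC' ?_
    intro x hx
    by_cases hxs : x = s
    · exact hxs ▸ Set.mem_insert _ _
    rcases hC' hx (hsubC' (Set.mem_insert _ _)) hxs with hxs' | hsx
    · exact Set.mem_insert_of_mem _ hxs'
    · exfalso
      by_cases hxC : x ∈ C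
      · exact hs (hclosed x hxC s hsx)
      · have hclqx : IsCliqueOn adj Cᶜ
            (insert x (insert s {u | u ∈ Cᶜ ∧ adj u s})) := by
          constructor
          · rintro y (rfl | rfl | hy)
            · exact hxC
            · exact hs
            · exact hy.1
          · refine clique_insert' hclq' ?_
            rintro b (rfl | hb) hbx
            · exact Or.inr hsx
            · exact hC' hx (hsubC' (Set.mem_insert_of_mem _ hb.2)) (Ne.symm hbx)
        have heq := hmax' _ hclqx (Set.subset_insert _ _)
        have hxM : x ∈ insert s {u | u ∈ Cᶜ ∧ adj u s} := by
          rw [heq]; exact Set.mem_insert _ _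
        rcases hxM with rfl | hxM
        · exact hxs rfl
        · exact no2 x s hxM.2 hsx
  · show IsMaxClique adj (insert v {u | adj u v})
    rw [← hv]; exact hC
  · intro s hsink hsC
    have hsC' : s ∈ C := not_not.mp hsC
    by_contra hne
    have hsv : adj s v := by
      have h := hsC'
      rw [hv] at h
      rcases h with rfl | h
      · exact absurd rfl hne
      · exact h
    have hvnM : v ∉ insert s {u | adj u s} := by
      rintro (rfl | h)
      · exact hne rfl
      · exact no2 s v hsv h
    have hcliq : IsClique adj (insert v (insert s {u | adj u s})) := by
      refine clique_insert' hsink.1 ?_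
      rintro b (rfl | hb) hbv
      · exact Or.inr hsv
      · exact hC.1 hvC (hclosed s hsC' b hb) (Ne.symm hbv)
    have heq := hsink.2 _ hcliq (Set.subset_insert _ _)
    rw [heq] at hvnM
    exact hvnM (Set.mem_insert _ _)
end

section
/- Every finite DAG D without v-structures admits a topological ordering σ satisfying the clique block property: letting s₁ < s₂ < ⋯ < s_r (in σ-order) be the sink vertices of D, and letting L_i(σ) be the block of vertices u with σ(s_{i−1}) < σ(u) ≤ σ(s_i) (with L₁(σ) the set of u with σ(u) ≤ σ(s₁)), every block L_i(σ) induces a clique in the skeleton of D, and every vertex lies in some block. -/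
/-- The clique block of the sink vertex s with respect to the ordering σ: vertices at
or before s, and strictly after every sink vertex preceding s. -/
def Block {V : Type*} [Fintype V] (adj : V → V → Prop)
    (σ : V ≃ Fin (Fintype.card V)) (s : V) : Set V :=
  {u | σ u ≤ σ s ∧ ∀ t : V, IsSink adj t → σ t < σ s → σ t < σ u}

/-! ### Auxiliary material -/

open Classical Finset
set_option linter.unusedSectionVars false

section NatHelpers

lemma natKeyLe {N a b r r' : ℕ} (hr' : r' < N) (h : a*N + r ≤ b*N + r') : a ≤ b := by
  by_contra hab
  push_neg at hab
  have h1 : (b+1) * N ≤ a * N := Nat.mul_le_mul_right _ hab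
  have : b * N + r' < a * N + r := by nlinarith
  omega

lemma natKeyInj {N a b r r' : ℕ} (hr : r < N) (hr' : r' < N) (h : a*N + r = b*N + r') :
    a = b ∧ r = r' := by
  have h1 : a ≤ b := natKeyLe hr' h.le
  have h2 : b ≤ a := natKeyLe hr h.ge
  have : a = b := le_antisymm h1 h2
  subst this
  omega

lemma sumPowLt (K : ℕ) : ∑ j ∈ Finset.range K, 2^j < 2^K := by
  induction K with
  | zero => simp
  | succ n ih => rw [Finset.sum_range_succ, pow_succ]; omega

end NatHelpers

section Weights

variable {V : Type*} [Fintype V] [LinearOrder V]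

/-- number of vertices above `x`. -/
noncomputable def cc (x : V) : ℕ := (Finset.univ.filter (fun y => x < y)).card

/-- binary weight of a vertex: earlier vertices get bigger weights. -/
noncomputable def wt (x : V) : ℕ := 2 ^ (cc x)

/-- total weight of a finite set of vertices; encodes the set as a binary number in which
lexicographically smaller sets get larger values. -/
noncomputable def EE (K : Finset V) : ℕ := ∑ x ∈ K, wt x

lemma cc_lt_cc {x y : V} (h : x < y) : cc y < cc x := by
  apply Finset.card_lt_card
  constructor
  · intro z hz
    simp only [mem_filter, mem_univ, true_and] at hz ⊢
    exact h.trans hz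
  · intro hsub
    have h1 : y ∈ univ.filter (fun z => x < z) := by simp [h]
    have := hsub h1
    simp at this

lemma EE_le_univ (K : Finset V) : EE K ≤ EE (univ : Finset V) :=
  Finset.sum_le_sum_of_subset (subset_univ K)

lemma EE_lt {A B : Finset V} (m : V) (hmA : m ∈ A) (hmB : m ∉ B)
    (h : ∀ b ∈ B, b ∉ A → m < b) : EE B < EE A := by
  have hsplit : EE (B ∩ A) + EE (B \ A) = EE B := Finset.sum_inter_add_sum_sdiff B A wt
  have hdiff : EE (B \ A) < wt m := by
    have hlt : ∀ b ∈ B \ A, cc b < cc m := by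
      intro b hb
      rw [mem_sdiff] at hb
      exact cc_lt_cc (h b hb.1 hb.2)
    have hinj : ∀ x ∈ B \ A, ∀ y ∈ B \ A, cc x = cc y → x = y := by
      intro x hx y hy hxy
      rcases lt_trichotomy x y with h' | h' | h'
      · exact absurd hxy (ne_of_gt (cc_lt_cc h'))
      · exact h'
      · exact absurd hxy (ne_of_lt (cc_lt_cc h'))
    calc EE (B \ A) = ∑ j ∈ (B \ A).image cc, 2 ^ j := (Finset.sum_image hinj).symm
      _ ≤ ∑ j ∈ Finset.range (cc m), 2 ^ j := by
          apply Finset.sum_le_sum_of_subset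
          intro j hj
          rw [Finset.mem_image] at hj
          obtain ⟨b, hb, rfl⟩ := hj
          rw [Finset.mem_range]
          exact hlt b hb
      _ < 2 ^ (cc m) := sumPowLt _
  have hup : EE (B ∩ A) + wt m ≤ EE A := by
    have h1 : EE (insert m (B ∩ A)) = wt m + EE (B ∩ A) :=
      Finset.sum_insert (by simp [hmB])
    have h2 : insert m (B ∩ A) ⊆ A := by
      intro x hx
      rcases Finset.mem_insert.mp hx with rfl | hx
      · exact hmA
      · exact (Finset.mem_inter.mp hx).2
    have h3 : EE (insert m (B ∩ A)) ≤ EE A := Finset.sum_le_sum_of_subset (f := wt) h2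
    omega
  omega

lemma EE_injective {A B : Finset V} (h : EE A = EE B) : A = B := by
  by_contra hne
  have hΔ : ((A \ B) ∪ (B \ A)).Nonempty := by
    rw [Finset.nonempty_iff_ne_empty]
    intro he
    rw [Finset.union_eq_empty, Finset.sdiff_eq_empty_iff_subset,
      Finset.sdiff_eq_empty_iff_subset] at he
    exact hne (Finset.Subset.antisymm he.1 he.2)
  set m := ((A \ B) ∪ (B \ A)).min' hΔ with hm
  have hmmem := Finset.min'_mem _ hΔ
  rw [← hm, Finset.mem_union] at hmmem
  rcases hmmem with hm1 | hm1
  · rw [Finset.mem_sdiff] at hm1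
    have := EE_lt m hm1.1 hm1.2 (fun b hb hbn => by
      have hbΔ : b ∈ (A \ B) ∪ (B \ A) := by
        rw [Finset.mem_union, Finset.mem_sdiff, Finset.mem_sdiff]
        exact Or.inr ⟨hb, hbn⟩
      have := Finset.min'_le _ _ hbΔ
      rw [← hm] at this
      exact lt_of_le_of_ne this (fun he => hm1.2 (he ▸ hb)))
    omega
  · rw [Finset.mem_sdiff] at hm1
    have := EE_lt m hm1.1 hm1.2 (fun b hb hbn => by
      have hbΔ : b ∈ (A \ B) ∪ (B \ A) := by
        rw [Finset.mem_union, Finset.mem_sdiff, Finset.mem_sdiff]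
        exact Or.inl ⟨hb, hbn⟩
      have := Finset.min'_le _ _ hbΔ
      rw [← hm] at this
      exact lt_of_le_of_ne this (fun he => hm1.2 (he ▸ hb)))
    omega

end Weights

section Cliques

variable {V : Type*} [Fintype V] (adj : V → V → Prop)

/-- Finset version of maximal clique. -/
def MCliq (K : Finset V) : Prop :=
  IsClique adj ↑K ∧ ∀ K' : Finset V, IsClique adj ↑K' → K ⊆ K' → K = K'

/-- Finset consisting of `s` together with its parents. -/
noncomputable def Cf (s : V) : Finset V := univ.filter (fun x => x = s ∨ adj x s)

variable {adj}

lemma mem_Cf {s x : V} : x ∈ Cf adj s ↔ x = s ∨ adj x s := by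
  simp [Cf]

lemma coe_Cf (s : V) : (↑(Cf adj s) : Set V) = insert s {u | adj u s} := by
  ext x
  simp [Cf, Set.mem_insert_iff]

lemma mcliq_iff {K : Finset V} : MCliq adj K ↔ IsMaxClique adj ↑K := by
  constructor
  · rintro ⟨h1, h2⟩
    refine ⟨h1, fun C' hC' hsub => ?_⟩
    have hfin : C'.Finite := Set.toFinite C'
    have hK : K ⊆ hfin.toFinset := by
      intro x hx
      rw [Set.Finite.mem_toFinset]
      exact hsub hx
    have hC'c : IsClique adj ↑hfin.toFinset := by
      rwa [Set.Finite.coe_toFinset]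
    have := h2 _ hC'c hK
    rw [this, Set.Finite.coe_toFinset]
  · rintro ⟨h1, h2⟩
    refine ⟨h1, fun K' hK' hsub => ?_⟩
    have := h2 ↑K' hK' (by exact_mod_cast hsub)
    exact_mod_cast this

lemma exists_mcliq_extend {S : Finset V} (hS : IsClique adj ↑S) :
    ∃ K : Finset V, MCliq adj K ∧ S ⊆ K := by
  have hne : (Finset.univ.filter (fun K : Finset V => IsClique adj ↑K ∧ S ⊆ K)).Nonempty :=
    ⟨S, by simp [hS]⟩
  obtain ⟨K, hKmem, hKmax⟩ := Finset.exists_max_image _ (fun K : Finset V => K.card) hne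
  rw [Finset.mem_filter] at hKmem
  refine ⟨K, ⟨hKmem.2.1, fun K' hK' hsub => ?_⟩, hKmem.2.2⟩
  have hK'mem : K' ∈ Finset.univ.filter (fun K : Finset V => IsClique adj ↑K ∧ S ⊆ K) := by
    simp only [Finset.mem_filter, Finset.mem_univ, true_and]
    exact ⟨hK', hKmem.2.2.trans hsub⟩
  exact Finset.eq_of_subset_of_card_le hsub (hKmax K' hK'mem)

lemma skel_symm {u v : V} (h : Skel adj u v) : Skel adj v u := h.symm

variable [LinearOrder V]

lemma skel_dir (hadj : ∀ a b : V, adj a b → a < b) {u v : V}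
    (h : Skel adj u v) (hlt : u < v) : adj u v := by
  rcases h with h | h
  · exact h
  · exact absurd (hadj _ _ h) (not_lt.mpr hlt.le)

lemma Cf_clique (hnv : NoVStruct adj) {s : V} : IsClique adj ↑(Cf adj s) := by
  rw [coe_Cf]
  intro u hu v hv huv
  rcases hu with rfl | hu
  · rcases hv with rfl | hv
    · exact absurd rfl huv
    · exact Or.inr hv
  · rcases hv with rfl | hv
    · exact Or.inl hu
    · exact hnv s u v hu hv huv

lemma mem_Cf_le (hadj : ∀ a b : V, adj a b → a < b) {s w : V} (hw : w ∈ Cf adj s) : w ≤ s := by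
  rcases mem_Cf.mp hw with rfl | hw
  · exact le_refl _
  · exact (hadj _ _ hw).le

lemma self_mem_Cf {s : V} : s ∈ Cf adj s := mem_Cf.mpr (Or.inl rfl)

lemma mcliq_eq_Cf_max (hadj : ∀ a b : V, adj a b → a < b) (hnv : NoVStruct adj)
    {K : Finset V} (hK : MCliq adj K) (hne : K.Nonempty) : K = Cf adj (K.max' hne) := by
  set m := K.max' hne with hm
  have hsub : K ⊆ Cf adj m := by
    intro w hw
    rcases eq_or_ne w m with rfl | hne'
    · exact self_mem_Cf
    · have hskel : Skel adj w m :=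
        hK.1 (Finset.mem_coe.mpr hw) (Finset.mem_coe.mpr (K.max'_mem hne)) hne'
      have hlt : w < m := lt_of_le_of_ne (K.le_max' w hw) hne'
      have : adj w m := skel_dir hadj hskel hlt
      exact mem_Cf.mpr (Or.inr this)
  exact hK.2 _ (Cf_clique hnv) hsub

lemma sink_iff_mcliq {s : V} : IsSink adj s ↔ MCliq adj (Cf adj s) := by
  rw [mcliq_iff, coe_Cf]
  rfl

lemma mcliq_max_sink (hadj : ∀ a b : V, adj a b → a < b) (hnv : NoVStruct adj)
    {K : Finset V} (hK : MCliq adj K) (hne : K.Nonempty) : IsSink adj (K.max' hne) := by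
  rw [sink_iff_mcliq]
  rw [← mcliq_eq_Cf_max hadj hnv hK hne]
  exact hK

lemma mcliq_nonempty [Nonempty V] {K : Finset V} (hK : MCliq adj K) : K.Nonempty := by
  rw [Finset.nonempty_iff_ne_empty]
  rintro rfl
  obtain ⟨x⟩ := ‹Nonempty V›
  have hx : IsClique adj ↑({x} : Finset V) := by
    intro u hu v hv huv
    simp only [Finset.coe_singleton, Set.mem_singleton_iff] at hu hv
    exact absurd (hu.trans hv.symm) huv
  have := hK.2 {x} hx (Finset.empty_subset _)
  exact absurd this.symm (Finset.singleton_ne_empty x)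

end Cliques

section BaseOrder

lemma exists_base_order {V : Type*} [Fintype V] (adj : V → V → Prop) (hdag : IsDAG adj) :
    ∃ k₀ : V → ℕ, Function.Injective k₀ ∧ (∀ a b : V, adj a b → k₀ a < k₀ b) ∧
      ∀ u : V, k₀ u < Fintype.card V * (Fintype.card V + 1) := by
  classical
  set n := Fintype.card V with hn
  set h : V → ℕ := fun u => (univ.filter (fun x => Relation.TransGen adj x u)).card with hh
  set e := Fintype.equivFin V with he
  refine ⟨fun u => h u * n + (e u).val, ?_, ?_, ?_⟩
  · intro u v huv
    have h1 : ((e u).val : ℕ) < n := (e u).isLt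
    have h2 : ((e v).val : ℕ) < n := (e v).isLt
    have := natKeyInj h1 h2 huv
    have : e u = e v := Fin.ext this.2
    exact e.injective this
  · intro a b hab
    have hss : (univ.filter (fun x => Relation.TransGen adj x a)) ⊂
        (univ.filter (fun x => Relation.TransGen adj x b)) := by
      constructor
      · intro x hx
        simp only [mem_filter, mem_univ, true_and] at hx ⊢
        exact hx.tail hab
      · intro hsub
        have h1 : a ∈ univ.filter (fun x => Relation.TransGen adj x b) := by
          simp [Relation.TransGen.single hab]
        have := hsub h1
        simp only [mem_filter, mem_univ, true_and] at this
        exact hdag a this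
    have hlt : h a < h b := Finset.card_lt_card hss
    have h2 : ((e a).val : ℕ) < n := (e a).isLt
    have h3 : ((e b).val : ℕ) < n := (e b).isLt
    calc h a * n + (e a).val < h a * n + n := by omega
      _ = (h a + 1) * n := by ring
      _ ≤ h b * n := Nat.mul_le_mul_right _ hlt
      _ ≤ h b * n + (e b).val := Nat.le_add_right _ _
  · intro u
    have h1 : ((e u).val : ℕ) < n := (e u).isLt
    have h2 : h u ≤ n := by
      have := Finset.card_le_card (Finset.subset_univ
        (univ.filter (fun x => Relation.TransGen adj x u)))
      simpa using this
    nlinarith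

end BaseOrder

section Sigma

lemma exists_sigma {V : Type*} [Fintype V] (k : V → ℕ) (hk : Function.Injective k) :
    ∃ σ : V ≃ Fin (Fintype.card V), ∀ u v, σ u < σ v ↔ k u < k v := by
  letI : LinearOrder V := LinearOrder.lift' k hk
  refine ⟨(monoEquivOfFin V rfl).symm.toEquiv, fun u v => ?_⟩
  have h1 : (monoEquivOfFin V rfl).symm u < (monoEquivOfFin V rfl).symm v ↔ u < v :=
    OrderIso.lt_iff_lt _
  have h2 : u < v ↔ k u < k v := by
    constructor
    · intro h
      have hle : k u ≤ k v := le_of_lt h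
      rcases lt_or_eq_of_le hle with h' | h'
      · exact h'
      · exact absurd (hk h') (ne_of_lt h)
    · intro h
      refine lt_of_le_of_ne (show k u ≤ k v from le_of_lt h) ?_
      intro he; subst he; exact lt_irrefl _ h
  exact h1.trans h2

end Sigma

/-- Every finite DAG without v-structures admits a topological ordering satisfying the
clique block property: every block determined by consecutive sink vertices induces a
clique in the skeleton, and every vertex lies in some block. -/
theorem stmt10 {V : Type*} [Fintype V] (adj : V → V → Prop)
    (hdag : IsDAG adj) (hnv : NoVStruct adj) :
    ∃ σ : V ≃ Fin (Fintype.card V),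
      (∀ a b : V, adj a b → σ a < σ b) ∧
      (∀ s : V, IsSink adj s → IsClique adj (Block adj σ s)) ∧
      (∀ u : V, ∃ s : V, IsSink adj s ∧ u ∈ Block adj σ s) := by
  classical
  rcases isEmpty_or_nonempty V with hV | hV
  · refine ⟨Fintype.equivFin V, fun a => isEmptyElim a, fun s => isEmptyElim s,
      fun u => isEmptyElim u⟩
  -- nonempty case
  obtain ⟨k₀, hk₀inj, hk₀adj, hk₀bd⟩ := exists_base_order adj hdag
  set n := Fintype.card V with hn
  set N := n * (n + 1) with hN
  letI : LinearOrder V := LinearOrder.lift' k₀ hk₀inj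
  have hle : ∀ u v : V, u ≤ v ↔ k₀ u ≤ k₀ v := fun _ _ => Iff.rfl
  have hltk : ∀ u v : V, u < v ↔ k₀ u < k₀ v := by
    intro u v
    rw [lt_iff_le_not_ge, hle, hle]
    omega
  have hadj : ∀ a b : V, adj a b → a < b := fun a b h => (hltk a b).mpr (hk₀adj a b h)
  -- choose lexicographically minimal (= weight-maximal) maximal cliques
  have hFex : ∀ u : V, ∃ K : Finset V, (MCliq adj K ∧ u ∈ K) ∧
      ∀ K' : Finset V, MCliq adj K' → u ∈ K' → EE K' ≤ EE K := by
    intro u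
    have hsingle : IsClique adj ↑({u} : Finset V) := by
      intro x hx y hy hxy
      simp only [Finset.coe_singleton, Set.mem_singleton_iff] at hx hy
      exact absurd (hx.trans hy.symm) hxy
    obtain ⟨K0, hK0, hK0sub⟩ := exists_mcliq_extend hsingle
    have hne : (Finset.univ.filter (fun K : Finset V => MCliq adj K ∧ u ∈ K)).Nonempty :=
      ⟨K0, by simp [hK0, hK0sub (Finset.mem_singleton_self u)]⟩
    obtain ⟨K, hKmem, hKmax⟩ := Finset.exists_max_image _ EE hne
    rw [Finset.mem_filter] at hKmem
    refine ⟨K, hKmem.2, fun K' h1 h2 => hKmax K' ?_⟩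
    simp only [Finset.mem_filter, Finset.mem_univ, true_and]
    exact ⟨h1, h2⟩
  choose F hF12 hF3 using hFex
  have hF1 : ∀ u : V, MCliq adj (F u) := fun u => (hF12 u).1
  have hF2 : ∀ u : V, u ∈ F u := fun u => (hF12 u).2
  -- sinks get their own parent-clique
  have hFs : ∀ s : V, IsSink adj s → F s = Cf adj s := by
    intro s hs
    have hmc : MCliq adj (Cf adj s) := sink_iff_mcliq.mp hs
    have h1 : EE (Cf adj s) ≤ EE (F s) := hF3 s _ hmc self_mem_Cf
    by_contra hne
    have hss : ¬ (Cf adj s ⊆ F s) := by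
      intro hsub
      exact hne ((hmc.2 (F s) (hF1 s).1 hsub).symm)
    obtain ⟨m, hm⟩ := Finset.sdiff_nonempty.mpr hss
    rw [Finset.mem_sdiff] at hm
    have hkey : EE (F s) < EE (Cf adj s) := by
      refine EE_lt m hm.1 hm.2 ?_
      intro x hx hxn
      have hxs : x ≠ s := fun he => hxn (he ▸ self_mem_Cf)
      have hskel : Skel adj x s := (hF1 s).1 (Finset.mem_coe.mpr hx)
        (Finset.mem_coe.mpr (hF2 s)) hxs
      have hsx : s < x := by
        rcases hskel with h' | h'
        · exact absurd (mem_Cf.mpr (Or.inr h')) hxn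
        · exact hadj _ _ h'
      exact lt_of_le_of_lt (mem_Cf_le hadj hm.1) hsx
    omega
  -- the sink at the top of F u
  have hFne : ∀ u : V, (F u).Nonempty := fun u => ⟨u, hF2 u⟩
  set t : V → V := fun u => (F u).max' (hFne u) with ht
  have htsink : ∀ u : V, IsSink adj (t u) := fun u =>
    mcliq_max_sink hadj hnv (hF1 u) (hFne u)
  have hFeqCt : ∀ u : V, F u = Cf adj (t u) := fun u =>
    mcliq_eq_Cf_max hadj hnv (hF1 u) (hFne u)
  have hut : ∀ u : V, u ≤ t u := fun u => (F u).le_max' u (hF2 u)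
  -- the global key
  set B := EE (univ : Finset V) with hB
  set k : V → ℕ := fun u => (B - EE (F u)) * N + k₀ u with hk
  have hEEle : ∀ K : Finset V, EE K ≤ B := fun K => EE_le_univ K
  have hkinj : Function.Injective k := by
    intro u v huv
    simp only [hk] at huv
    have := natKeyInj (hk₀bd u) (hk₀bd v) huv
    exact hk₀inj this.2
  obtain ⟨σ, hσ⟩ := exists_sigma k hkinj
  have hσle : ∀ u v : V, σ u ≤ σ v ↔ k u ≤ k v := by
    intro u v
    have h1 := hσ v u
    constructor
    · intro h
      by_contra hc
      push_neg at hc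
      exact absurd (h1.mpr hc) (not_lt.mpr h)
    · intro h
      by_contra hc
      push_neg at hc
      exact absurd (h1.mp hc) (not_lt.mpr h)
  -- topological comparison of clique weights along edges
  have hEE : ∀ a b : V, adj a b → EE (F b) ≤ EE (F a) := by
    intro a b h
    by_cases hmem : a ∈ F b
    · exact hF3 a (F b) (hF1 b) hmem
    · set S : Finset V := univ.filter (fun w => w = a ∨ (w ∈ F b ∧ Skel adj w a)) with hS
      have hmemS : ∀ w : V, w ∈ S ↔ w = a ∨ (w ∈ F b ∧ Skel adj w a) := by
        intro w; simp [hS]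
      have hSclique : IsClique adj ↑S := by
        intro x hx y hy hxy
        rw [Finset.mem_coe, hmemS] at hx hy
        rcases hx with rfl | hx
        · rcases hy with rfl | hy
          · exact absurd rfl hxy
          · exact skel_symm hy.2
        · rcases hy with rfl | hy
          · exact hx.2
          · exact (hF1 b).1 (Finset.mem_coe.mpr hx.1) (Finset.mem_coe.mpr hy.1) hxy
      obtain ⟨L, hL, hSL⟩ := exists_mcliq_extend hSclique
      have haS : a ∈ S := (hmemS a).mpr (Or.inl rfl)
      have haL : a ∈ L := hSL haS
      have hbS : b ∈ S := (hmemS b).mpr (Or.inr ⟨hF2 b, Or.inr h⟩)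
      have hbL : b ∈ L := hSL hbS
      have hkey : EE (F b) < EE L := by
        refine EE_lt a haL hmem ?_
        intro x hx hxL
        have hxS : x ∉ S := fun hc => hxL (hSL hc)
        rw [hmemS] at hxS
        push_neg at hxS
        have hxa : x ≠ a := hxS.1
        have hxskel : ¬ Skel adj x a := hxS.2 hx
        have hxb : x ≠ b := by
          rintro rfl
          exact hxskel (Or.inr h)
        have hskel : Skel adj x b := (hF1 b).1 (Finset.mem_coe.mpr hx)
          (Finset.mem_coe.mpr (hF2 b)) hxb
        rcases hskel with h' | h'
        · exact absurd (hnv b x a h' h hxa) hxskel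
        · exact lt_trans (hadj _ _ h) (hadj _ _ h')
      exact le_of_lt (lt_of_lt_of_le hkey (hF3 a L hL haL))
  refine ⟨σ, ?_, ?_, ?_⟩
  · -- topological
    intro a b h
    rw [hσ]
    have h1 : EE (F b) ≤ EE (F a) := hEE a b h
    rcases lt_or_eq_of_le h1 with h2 | h2
    · have h3 : B - EE (F a) < B - EE (F b) := by
        have := hEEle (F a)
        omega
      simp only [hk]
      calc (B - EE (F a)) * N + k₀ a < (B - EE (F a)) * N + N := by
            have := hk₀bd a; omega
        _ = ((B - EE (F a)) + 1) * N := by ring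
        _ ≤ (B - EE (F b)) * N := Nat.mul_le_mul_right _ h3
        _ ≤ (B - EE (F b)) * N + k₀ b := Nat.le_add_right _ _
    · simp only [hk, h2]
      have := hk₀adj a b h
      omega
  · -- blocks are cliques
    intro s hs
    have hsub : ∀ u : V, u ∈ Block adj σ s → u ∈ (↑(Cf adj s) : Set V) := by
      intro u hu
      obtain ⟨hu1, hu2⟩ := hu
      have hFtu : F (t u) = F u := by
        rw [hFs (t u) (htsink u), ← hFeqCt u]
      have hσut : σ u ≤ σ (t u) := by
        rw [hσle]
        simp only [hk, hFtu]
        have : k₀ u ≤ k₀ (t u) := (hle u (t u)).mp (hut u)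
        omega
      by_cases hts : t u = s
      · have : u ∈ Cf adj s := by rw [← hts, ← hFeqCt u]; exact hF2 u
        exact Finset.mem_coe.mpr this
      · have h1 : ¬ (σ (t u) < σ s) := by
          intro hlt
          exact absurd (hu2 (t u) (htsink u) hlt) (not_lt.mpr hσut)
        have h2 : σ s < σ (t u) := by
          rcases lt_or_eq_of_le (not_lt.mp h1) with h' | h'
          · exact h'
          · exact absurd (σ.injective h').symm hts
        have hk1 : k u ≤ k s := (hσle u s).mp hu1
        have hk2 : k s ≤ k (t u) := (hσle s (t u)).mp h2.le
        simp only [hk, hFtu] at hk1 hk2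
        have ha : B - EE (F u) ≤ B - EE (F s) := natKeyLe (hk₀bd s) hk1
        have hb : B - EE (F s) ≤ B - EE (F u) := natKeyLe (hk₀bd (t u)) hk2
        have hEEeq : EE (F u) = EE (F s) := by
          have h3 := hEEle (F u)
          have h4 := hEEle (F s)
          omega
        have hFeq : F u = F s := EE_injective hEEeq
        have h5 : Cf adj (t u) = Cf adj s := by rw [← hFeqCt u, hFeq, hFs s hs]
        have h6 : t u ≤ s := mem_Cf_le hadj (by rw [← h5]; exact self_mem_Cf)
        have h7 : s ≤ t u := mem_Cf_le hadj (by rw [h5]; exact self_mem_Cf)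
        exact absurd (le_antisymm h6 h7) hts
    intro x hx y hy hxy
    exact Cf_clique hnv (hsub x hx) (hsub y hy) hxy
  · -- coverage
    intro u
    have hFtu : F (t u) = F u := by
      rw [hFs (t u) (htsink u), ← hFeqCt u]
    have hσut : σ u ≤ σ (t u) := by
      rw [hσle]
      simp only [hk, hFtu]
      have : k₀ u ≤ k₀ (t u) := (hle u (t u)).mp (hut u)
      omega
    have hne : (univ.filter (fun x : V => IsSink adj x ∧ σ u ≤ σ x)).Nonempty :=
      ⟨t u, by simp only [mem_filter, mem_univ, true_and]; exact ⟨htsink u, hσut⟩⟩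
    obtain ⟨s, hsS, hsmin⟩ := Finset.exists_min_image _ (fun x => σ x) hne
    rw [Finset.mem_filter] at hsS
    refine ⟨s, hsS.2.1, hsS.2.2, ?_⟩
    intro t' ht' hlt
    by_contra hge
    push_neg at hge
    have hmem : t' ∈ univ.filter (fun x : V => IsSink adj x ∧ σ u ≤ σ x) := by
      simp only [mem_filter, mem_univ, true_and]
      exact ⟨ht', hge⟩
    exact absurd hlt (not_lt.mpr (hsmin t' hmem))
end

section
/- Every finite DAG D without v-structures admits a CBSP ordering: a topological ordering σ that satisfies the clique block property (each block between consecutive sink vertices induces a clique in the skeleton) and the shared-parents property (whenever a and b are consecutive in σ and lie in the same clique block, every parent of a in D is also a parent of b in D). -/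
/-!
Build the order greedily: at each step, among the vertices all of whose parents are already
placed, place one with the most parents. If the last placed vertex `a` is not a sink, the clique
`{a} ∪ pa(a)` extends to some unplaced vertex, and a minimal such vertex is available with more
parents than `a`. Since `a` was itself a greedy choice, the next vertex `b` must be a child of
`a`, and the absence of v-structures gives `pa(b) \ {a} ⊆ pa(a)`, which is an equality by the
counting. Hence consecutive vertices up to each sink are linked by edges with growing parent sets,
which makes every block a clique with the shared-parents property.
-/

open Relation

section

variable {V : Type*} {adj : V → V → Prop}

def parents (adj : V → V → Prop) (v : V) : Set V := {p | adj p v}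

def ExtendsParents (adj : V → V → Prop) (a b : V) : Prop := adj a b ∧ parents adj a ⊆ parents adj b

lemma ExtendsParents.trans {a b c : V} (hab : ExtendsParents adj a b)
    (hbc : ExtendsParents adj b c) : ExtendsParents adj a c :=
  ⟨hbc.2 hab.1, hab.2.trans hbc.2⟩

lemma IsDAG.irrefl (hdag : IsDAG adj) (v : V) : ¬ adj v v :=
  fun h => hdag v (.single h)

lemma IsDAG.wellFounded [Finite V] (hdag : IsDAG adj) : WellFounded (TransGen adj) :=
  haveI : Std.Irrefl (TransGen adj) := ⟨hdag⟩
  Finite.wellFounded_of_trans_of_irrefl _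

lemma NoVStruct.isClique_insert_parents (hnv : NoVStruct adj) (v : V) :
    IsClique adj (insert v (parents adj v)) := by
  rintro u (rfl | hu) w (rfl | hw) huw
  · exact absurd rfl huw
  · exact Or.inr hw
  · exact Or.inl hu
  · exact hnv _ u w hu hw huw

lemma NoVStruct.isSink_of_forall_not_adj (hnv : NoVStruct adj) {s : V}
    (hs : ∀ x, ¬ adj s x) : IsSink adj s := by
  refine ⟨hnv.isClique_insert_parents s, fun C hC hsub => hsub.antisymm fun v hv => ?_⟩
  by_cases hvs : v = s
  · exact hvs ▸ Set.mem_insert v _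
  · exact (hC hv (hsub (Set.mem_insert s _)) hvs).elim (Or.inr ·) (absurd · (hs v))

lemma exists_available_child_of_not_isSink [Finite V] (hdag : IsDAG adj) (hnv : NoVStruct adj)
    {P : Set V} (hP : ∀ v ∈ P, parents adj v ⊆ P) {a : V} (ha : a ∈ P)
    (haP : ∀ y ∈ P, ¬ adj a y) (hns : ¬ IsSink adj a) :
    ∃ x ∉ P, parents adj x ⊆ P ∧ insert a (parents adj a) ⊆ parents adj x := by
  set C := insert a (parents adj a)
  have hCP : C ⊆ P := Set.insert_subset ha (hP a ha)
  obtain ⟨C', hC', hCC', hne⟩ : ∃ C', IsClique adj C' ∧ C ⊆ C' ∧ C ≠ C' := by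
    unfold IsSink IsMaxClique at hns
    push Not at hns
    exact hns (hnv.isClique_insert_parents a)
  obtain ⟨t, htC', htC⟩ := Set.exists_of_ssubset (hCC'.ssubset_of_ne hne)
  have hadj : ∀ u ∈ C, Skel adj u t := fun u hu =>
    hC' (hCC' hu) htC' (ne_of_mem_of_not_mem hu htC)
  have htP : t ∉ P := fun htP => (hadj a (Set.mem_insert a _)).elim (haP t htP)
    fun h => htC (Set.mem_insert_of_mem a h)
  -- A vertex outside the down-closed set `P` cannot be a parent of a vertex of `P`.
  have hchild : ∀ y ∉ P, ∀ u ∈ C, Skel adj u y → adj u y := fun y hy u hu h =>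
    h.resolve_right fun hyu => hy (hP u (hCP hu) hyu)
  obtain ⟨x, ⟨hxP, hCx⟩, hmin⟩ := hdag.wellFounded.has_min {y | y ∉ P ∧ C ⊆ parents adj y}
    ⟨t, htP, fun u hu => hchild t htP u hu (hadj u hu)⟩
  refine ⟨x, hxP, fun p hpx => ?_, hCx⟩
  by_contra hpP
  refine hmin p ⟨hpP, fun u hu => hchild p hpP u hu ?_⟩ (.single hpx)
  exact hnv x u p (hCx hu) hpx (ne_of_mem_of_not_mem (hCP hu) hpP)

lemma extendsParents_of_greedy [Finite V] (hdag : IsDAG adj) (hnv : NoVStruct adj)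
    {T : Set V} {a b : V} (hT : ∀ v ∈ insert a T, parents adj v ⊆ insert a T)
    (haT : ∀ y ∈ T, ¬ adj a y)
    (ha_max : ∀ v ∉ T, parents adj v ⊆ T → (parents adj v).ncard ≤ (parents adj a).ncard)
    (hb : b ∉ insert a T) (hbP : parents adj b ⊆ insert a T)
    (hb_max : ∀ v ∉ insert a T, parents adj v ⊆ insert a T →
      (parents adj v).ncard ≤ (parents adj b).ncard)
    (hns : ¬ IsSink adj a) :
    ExtendsParents adj a b := by
  have haP : ∀ y ∈ insert a T, ¬ adj a y := by
    rintro y (rfl | hy)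
    exacts [hdag.irrefl y, haT y hy]
  obtain ⟨x, hxP, hxpa, hax⟩ :=
    exists_available_child_of_not_isSink hdag hnv hT (Set.mem_insert a T) haP hns
  have hlt : (parents adj a).ncard < (parents adj b).ncard := calc
    (parents adj a).ncard < (insert a (parents adj a)).ncard :=
      by rw [Set.ncard_insert_of_notMem (s := parents adj a) (hdag.irrefl a)]; omega
    _ ≤ (parents adj x).ncard := Set.ncard_le_ncard hax
    _ ≤ (parents adj b).ncard := hb_max x hxP hxpa
  have hab : adj a b := by
    by_contra hab
    refine (ha_max b (fun h => hb (Set.mem_insert_of_mem a h)) fun p hp => ?_).not_gt hlt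
    exact (hbP hp).resolve_left fun h => hab (h ▸ hp)
  have hsub : parents adj b \ {a} ⊆ parents adj a := fun w ⟨hwb, hwa⟩ =>
    (hnv b w a hwb hab hwa).resolve_right (haT w ((hbP hwb).resolve_left hwa))
  have hcard : (parents adj a).ncard ≤ (parents adj b \ {a}).ncard := by
    rw [Set.ncard_sdiff_singleton_of_mem (s := parents adj b) hab]; omega
  refine ⟨hab, ?_⟩
  rw [← Set.eq_of_subset_of_ncard_le hsub hcard]
  exact Set.sdiff_subset

/-- Greedy orders, listed in reverse: the head is the most recently placed vertex. -/
inductive IsGreedyRev (adj : V → V → Prop) : List V → Prop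
  | nil : IsGreedyRev adj []
  | cons {b : V} {M : List V} : IsGreedyRev adj M → b ∉ M → parents adj b ⊆ {p | p ∈ M} →
      (∀ v ∉ M, parents adj v ⊆ {p | p ∈ M} →
        (parents adj v).ncard ≤ (parents adj b).ncard) →
      IsGreedyRev adj (b :: M)

namespace IsGreedyRev

lemma nodup {M : List V} (hM : IsGreedyRev adj M) : M.Nodup := by
  induction hM with
  | nil => exact .nil
  | cons _ hb _ _ ih => exact ih.cons hb

lemma parents_subset {M : List V} (hM : IsGreedyRev adj M) {v : V} (hv : v ∈ M) :
    parents adj v ⊆ {p | p ∈ M} := by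
  induction hM with
  | nil => simp at hv
  | cons _ _ hbM _ ih =>
    rcases List.mem_cons.mp hv with rfl | hv
    · exact hbM.trans fun p hp => List.mem_cons_of_mem _ hp
    · exact (ih hv).trans fun p hp => List.mem_cons_of_mem _ hp

lemma not_adj_of_mem {b : V} {M : List V} (h : IsGreedyRev adj (b :: M)) {y : V}
    (hy : y ∈ M) : ¬ adj b y := by
  cases h with
  | cons hM hb _ _ => exact fun hby => hb (hM.parents_subset hy hby)

lemma pairwise {M : List V} (hM : IsGreedyRev adj M) : M.Pairwise fun x y => ¬ adj x y := by
  induction hM with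
  | nil => exact .nil
  | @cons b M hM hb hbM hmax ih =>
    exact List.Pairwise.cons (fun y hy => (IsGreedyRev.cons hM hb hbM hmax).not_adj_of_mem hy) ih

lemma isChain [Finite V] (hdag : IsDAG adj) (hnv : NoVStruct adj) {M : List V}
    (hM : IsGreedyRev adj M) :
    M.IsChain fun b a => ¬ IsSink adj a → ExtendsParents adj a b := by
  induction hM with
  | nil => exact .nil
  | @cons b M hM hb hbM hmax ih =>
    cases hM with
    | nil => exact List.isChain_singleton b
    | @cons a T hT ha haT hamax =>
      have hM := IsGreedyRev.cons hT ha haT hamax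
      have hset : {p | p ∈ a :: T} = insert a {p | p ∈ T} := by ext; simp
      refine List.isChain_cons_cons.mpr ⟨fun hns => ?_, ih⟩
      refine extendsParents_of_greedy hdag hnv (fun v hv => ?_)
        (fun y hy => hM.not_adj_of_mem hy) hamax (hset ▸ hb) (hset ▸ hbM)
        (fun v hv hvpa => hmax v (hset.symm ▸ hv : v ∉ {p | p ∈ a :: T}) (hset ▸ hvpa)) hns
      exact hset ▸ hM.parents_subset (hset.symm ▸ hv : v ∈ {p | p ∈ a :: T})

lemma exists_cons [Finite V] (hdag : IsDAG adj) {M : List V} (hM : IsGreedyRev adj M)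
    (hne : ∃ v, v ∉ M) : ∃ b, IsGreedyRev adj (b :: M) := by
  obtain ⟨x, hxM, hxmin⟩ := hdag.wellFounded.has_min {v | v ∉ M} hne
  obtain ⟨b, ⟨hbM, hbpa⟩, hbmax⟩ := Set.exists_max_image
    {v | v ∉ M ∧ parents adj v ⊆ {p | p ∈ M}} (fun v => (parents adj v).ncard) (Set.toFinite _)
    ⟨x, hxM, fun p hp => by_contra fun hpM => hxmin p hpM (.single hp)⟩
  exact ⟨b, hM.cons hbM hbpa fun v hv hvpa => hbmax v ⟨hv, hvpa⟩⟩

lemma exists_forall_mem [Fintype V] (hdag : IsDAG adj) {M : List V} (hM : IsGreedyRev adj M) :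
    ∃ L, IsGreedyRev adj L ∧ ∀ v, v ∈ L := by
  by_cases hall : ∀ v, v ∈ M
  · exact ⟨M, hM, hall⟩
  · obtain ⟨b, hb⟩ := hM.exists_cons hdag (not_forall.mp hall)
    have : M.length + 1 ≤ Fintype.card V := hb.nodup.length_le_card
    exact hb.exists_forall_mem hdag
termination_by Fintype.card V - M.length

end IsGreedyRev

lemma List.exists_equiv_fin_getElem?_eq [Fintype V] {L : List V} (hnd : L.Nodup)
    (hmem : ∀ v, v ∈ L) : ∃ σ : V ≃ Fin (Fintype.card V), ∀ v, L[(σ v : ℕ)]? = some v := by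
  classical
  let e := hnd.getEquivOfForallMemList L hmem
  have hlen : L.length = Fintype.card V := by simpa using Fintype.card_congr e
  refine ⟨e.symm.trans (finCongr hlen), fun v => ?_⟩
  exact List.getElem?_eq_some_iff.mpr ⟨(e.symm v).isLt, e.apply_symm_apply v⟩

lemma List.Pairwise.rel_of_getElem?_eq {R : V → V → Prop} {L : List V} (hL : L.Pairwise R)
    {f : V → ℕ} (hf : ∀ v, L[f v]? = some v) {a b : V} (hab : f a < f b) : R a b := by
  obtain ⟨ha, ha'⟩ := List.getElem?_eq_some_iff.mp (hf a)
  obtain ⟨hb, hb'⟩ := List.getElem?_eq_some_iff.mp (hf b)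
  exact ha' ▸ hb' ▸ List.pairwise_iff_getElem.mp hL _ _ ha hb hab

lemma List.IsChain.rel_of_getElem?_eq {R : V → V → Prop} {L : List V} (hL : L.IsChain R)
    {f : V → ℕ} (hf : ∀ v, L[f v]? = some v) {a b : V} (hab : f b = f a + 1) : R a b := by
  obtain ⟨ha, ha'⟩ := List.getElem?_eq_some_iff.mp (hf a)
  obtain ⟨hb, hb'⟩ := List.getElem?_eq_some_iff.mp (hf b)
  simp only [hab] at hb hb'
  exact ha' ▸ hb' ▸ List.isChain_iff_getElem.mp hL _ hb

section Block

variable [Fintype V] {σ : V ≃ Fin (Fintype.card V)}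

lemma extendsParents_of_forall_not_isSink
    (hstep : ∀ a b, (σ b : ℕ) = σ a + 1 → ¬ IsSink adj a → ExtendsParents adj a b)
    {u v : V} (huv : σ u < σ v) (hw : ∀ w, σ u ≤ σ w → σ w < σ v → ¬ IsSink adj w) :
    ExtendsParents adj u v := by
  obtain ⟨k, hk⟩ := Nat.exists_eq_add_of_lt huv
  induction k generalizing v with
  | zero => exact hstep u v hk (hw u le_rfl huv)
  | succ k ih =>
    set w := σ.symm ⟨σ u + k + 1, by omega⟩
    have hσw : (σ w : ℕ) = σ u + k + 1 := by simp [w]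
    exact (ih (by omega) (fun x h1 h2 => hw x h1 (by omega)) hσw).trans
      (hstep w v (by omega) (hw w (by omega) (by omega)))

lemma not_isSink_of_mem_block {s a : V} (ha : a ∈ Block adj σ s) (has : σ a < σ s) :
    ¬ IsSink adj a :=
  fun h => lt_irrefl _ (ha.2 a h has)

lemma mem_block_of_le_of_le {s u v w : V} (hu : u ∈ Block adj σ s) (hv : v ∈ Block adj σ s)
    (huw : σ u ≤ σ w) (hwv : σ w ≤ σ v) : w ∈ Block adj σ s :=
  ⟨hwv.trans hv.1, fun t ht hts => (hu.2 t ht hts).trans_le huw⟩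

lemma extendsParents_of_mem_block
    (hstep : ∀ a b, (σ b : ℕ) = σ a + 1 → ¬ IsSink adj a → ExtendsParents adj a b)
    {s u v : V} (hu : u ∈ Block adj σ s) (hv : v ∈ Block adj σ s) (huv : σ u < σ v) :
    ExtendsParents adj u v :=
  extendsParents_of_forall_not_isSink hstep huv fun _ huw hwv =>
    not_isSink_of_mem_block (mem_block_of_le_of_le hu hv huw hwv.le) (hwv.trans_le hv.1)

lemma isClique_block
    (hstep : ∀ a b, (σ b : ℕ) = σ a + 1 → ¬ IsSink adj a → ExtendsParents adj a b) (s : V) :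
    IsClique adj (Block adj σ s) := by
  intro u hu v hv huv
  rcases lt_or_gt_of_ne (σ.injective.ne huv) with h | h
  · exact .inl (extendsParents_of_mem_block hstep hu hv h).1
  · exact .inr (extendsParents_of_mem_block hstep hv hu h).1

lemma exists_isSink_mem_block (hnv : NoVStruct adj) (htop : ∀ a b, adj a b → σ a < σ b)
    (u : V) : ∃ s, IsSink adj s ∧ u ∈ Block adj σ s := by
  have : Nonempty V := ⟨u⟩
  obtain ⟨m, hm⟩ := Finite.exists_max σ
  have hsink : IsSink adj m := hnv.isSink_of_forall_not_adj fun x hx => (htop m x hx).not_ge (hm x)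
  obtain ⟨s, ⟨hs, hus⟩, hmin⟩ :=
    (InvImage.wf σ wellFounded_lt).has_min {t | IsSink adj t ∧ σ u ≤ σ t} ⟨m, hsink, hm u⟩
  exact ⟨s, hs, hus, fun t ht hts => lt_of_not_ge fun htu => hmin t ⟨ht, htu⟩ hts⟩

end Block

end

/-- Every finite DAG without v-structures admits a CBSP ordering: a topological ordering
with the clique block property and the shared-parents property (consecutive vertices in
a common clique block have nested parent sets). -/
theorem stmt11 {V : Type*} [Fintype V] (adj : V → V → Prop)
    (hdag : IsDAG adj) (hnv : NoVStruct adj) :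
    ∃ σ : V ≃ Fin (Fintype.card V),
      (∀ a b : V, adj a b → σ a < σ b) ∧
      (∀ s : V, IsSink adj s → IsClique adj (Block adj σ s)) ∧
      (∀ u : V, ∃ s : V, IsSink adj s ∧ u ∈ Block adj σ s) ∧
      (∀ a b : V, (σ b : ℕ) = (σ a : ℕ) + 1 →
        (∃ s : V, IsSink adj s ∧ a ∈ Block adj σ s ∧ b ∈ Block adj σ s) →
        ∀ p : V, adj p a → adj p b) := by
  obtain ⟨M, hM, hall⟩ := IsGreedyRev.nil.exists_forall_mem hdag
  obtain ⟨σ, hσ⟩ := List.exists_equiv_fin_getElem?_eq (List.nodup_reverse.mpr hM.nodup)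
    (by simpa using hall)
  have hpairwise := (List.pairwise_reverse (R := fun x y => ¬ adj y x)).mpr hM.pairwise
  have htop : ∀ a b, adj a b → σ a < σ b := fun a b hab => by
    by_contra! hba
    rcases hba.lt_or_eq with hba | hba
    · exact hpairwise.rel_of_getElem?_eq (f := fun v => σ v) hσ hba hab
    · exact hdag.irrefl a (σ.injective hba ▸ hab)
  have hstep : ∀ a b, (σ b : ℕ) = σ a + 1 → ¬ IsSink adj a → ExtendsParents adj a b := fun a b =>
    (List.isChain_reverse.mpr (hM.isChain hdag hnv)).rel_of_getElem?_eq (f := fun v => σ v) hσ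
  refine ⟨σ, htop, fun s _ => isClique_block hstep s, exists_isSink_mem_block hnv htop, ?_⟩
  rintro a b hab ⟨s, -, ha, hb⟩
  exact (extendsParents_of_mem_block hstep ha hb (by omega)).2
end

section
/- Let D be a finite DAG without v-structures, let σ be a topological ordering of D with the clique block property, and let a be a vertex that has a child b in its own clique block with σ(b) = σ(a) + 1. Define Cᵃ = {a} ∪ parents_D(a) and Sᵃ = {z : Cᵃ ⊆ parents_D(z)}, and let Yₐ be the set of vertices occurring strictly after a in σ that are not in Sᵃ. Then: if y ∈ Yₐ and z is a child of y in D, then z ∈ Yₐ. -/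
/-- Let σ be a topological ordering with the clique block property, and let a have a
child b consecutive to it in σ within the same clique block.  With Cᵃ = {a} ∪ parents(a),
Sᵃ = {z : Cᵃ ⊆ parents(z)}, and Yₐ the set of vertices strictly after a in σ that are
not in Sᵃ, the set Yₐ is closed under taking children. -/
theorem stmt12 {V : Type*} [Fintype V] (adj : V → V → Prop)
    (hdag : IsDAG adj) (hnv : NoVStruct adj)
    (σ : V ≃ Fin (Fintype.card V)) (htop : ∀ a b : V, adj a b → σ a < σ b)
    (hcb1 : ∀ s : V, IsSink adj s → IsClique adj (Block adj σ s))
    (hcb2 : ∀ u : V, ∃ s : V, IsSink adj s ∧ u ∈ Block adj σ s)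
    (a b : V) (hab : adj a b) (hconsec : (σ b : ℕ) = (σ a : ℕ) + 1)
    (hsame : ∃ s : V, IsSink adj s ∧ a ∈ Block adj σ s ∧ b ∈ Block adj σ s)
    (y z : V)
    (hy : σ a < σ y ∧ ¬ (insert a {u | adj u a} ⊆ {u | adj u y}))
    (hz : adj y z) :
    σ a < σ z ∧ ¬ (insert a {u | adj u a} ⊆ {u | adj u z}) := by
  obtain ⟨hay, hny⟩ := hy
  refine ⟨lt_trans hay (htop y z hz), fun hsub => hny ?_⟩
  intro u hu
  have huz : adj u z := hsub hu
  have huy : σ u < σ y := by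
    rcases hu with h | h
    · subst h; exact hay
    · exact lt_trans (htop u a h) hay
  have huney : u ≠ y := fun h => by simp [h] at huy
  rcases hnv z u y huz hz huney with h | h
  · exact h
  · exact absurd (htop y u h) (not_lt.mpr huy.le)
end

section
/- Let D be a finite DAG without v-structures, let a be a vertex of D, set Cᵃ = {a} ∪ parents_D(a) and Sᵃ = {z : Cᵃ ⊆ parents_D(z)}. If x ∈ {a} ∪ Sᵃ is not a sink vertex of D, then there exists y ∈ Sᵃ such that x is a parent of y and y is a sink vertex of D. -/
section Aux
variable {V : Type*} (adj : V → V → Prop)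

lemma kClique (hnv : NoVStruct adj) (z : V) :
    IsClique adj (insert z {u | adj u z}) := by
  rintro u (rfl | hu) v (rfl | hv) huv
  · exact absurd rfl huv
  · exact Or.inr hv
  · exact Or.inl hu
  · exact hnv z u v hu hv huv

lemma step (hdag : IsDAG adj) (hnv : NoVStruct adj) (z : V) (hns : ¬ IsSink adj z) :
    ∃ w, w ∉ insert z {u | adj u z} ∧ insert z {u | adj u z} ⊆ {u | adj u w} := by
  have hcl := kClique adj hnv z
  rw [IsSink, IsMaxClique] at hns
  push_neg at hns
  obtain ⟨C', hC', hsub, hne⟩ := hns hcl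
  obtain ⟨w, hwC, hwK⟩ := Set.exists_of_ssubset (hsub.ssubset_of_ne hne)
  have hzw : adj z w := by
    have hne' : z ≠ w := fun h => hwK (h ▸ Set.mem_insert z _)
    rcases hC' (hsub (Set.mem_insert z _)) hwC hne' with h | h
    · exact h
    · exact absurd (Set.mem_insert_of_mem z (show w ∈ {u | adj u z} from h)) hwK
  refine ⟨w, hwK, ?_⟩
  rintro u (rfl | hu)
  · exact hzw
  · have hne' : u ≠ w := fun h => hwK (h ▸ Set.mem_insert_of_mem z hu)
    rcases hC' (hsub (Set.mem_insert_of_mem z hu)) hwC hne' with h | h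
    · exact h
    · exact absurd (((Relation.TransGen.single h).tail hu).tail hzw) (hdag w)

lemma auxmain (hdag : IsDAG adj) (hnv : NoVStruct adj) [Fintype V] (a : V) :
    ∀ n (z : V), Fintype.card V - (insert z {u | adj u z}).ncard ≤ n →
      insert a {u | adj u a} ⊆ {u | adj u z} →
      ∃ y, insert a {u | adj u a} ⊆ {u | adj u y} ∧
        (y = z ∨ insert z {u | adj u z} ⊆ {u | adj u y}) ∧ IsSink adj y := by
  intro n
  induction n with
  | zero =>
    intro z hcard hCa
    by_cases hs : IsSink adj z
    · exact ⟨z, hCa, Or.inl rfl, hs⟩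
    · exfalso
      obtain ⟨w, hwK, hKw⟩ := step adj hdag hnv z hs
      have h1 : insert z {u | adj u z} ⊂ insert w {u | adj u w} := by
        constructor
        · exact (hKw.trans (Set.subset_insert _ _))
        · intro h
          exact hwK (h (Set.mem_insert w _))
      have h2 := Set.ncard_lt_ncard h1 (Set.toFinite _)
      have h3 : (insert w {u | adj u w}).ncard ≤ Fintype.card V := by
        refine (Set.ncard_le_ncard (Set.subset_univ _) (Set.toFinite _)).trans_eq ?_
        simp [Set.ncard_univ, Nat.card_eq_fintype_card]
      omega
  | succ n ih =>
    intro z hcard hCa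
    by_cases hs : IsSink adj z
    · exact ⟨z, hCa, Or.inl rfl, hs⟩
    · obtain ⟨w, hwK, hKw⟩ := step adj hdag hnv z hs
      have h1 : insert z {u | adj u z} ⊂ insert w {u | adj u w} := by
        constructor
        · exact (hKw.trans (Set.subset_insert _ _))
        · intro h
          exact hwK (h (Set.mem_insert w _))
      have h2 := Set.ncard_lt_ncard h1 (Set.toFinite _)
      have h3 : (insert w {u | adj u w}).ncard ≤ Fintype.card V := by
        refine (Set.ncard_le_ncard (Set.subset_univ _) (Set.toFinite _)).trans_eq ?_
        simp [Set.ncard_univ, Nat.card_eq_fintype_card]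
      obtain ⟨y, hy1, hy2, hy3⟩ := ih w (by omega)
        (fun u hu => hKw (Set.mem_insert_of_mem z (hCa hu)))
      refine ⟨y, hy1, Or.inr ?_, hy3⟩
      rcases hy2 with rfl | hy2
      · exact hKw
      · exact fun u hu => hy2 (Set.mem_insert_of_mem w (hKw hu))

end Aux

/-- With Cᵃ = {a} ∪ parents(a) and Sᵃ = {z : Cᵃ ⊆ parents(z)}: any x ∈ {a} ∪ Sᵃ that
is not a sink vertex of D has a child y ∈ Sᵃ that is a sink vertex of D. -/
theorem stmt13 {V : Type*} [Fintype V] (adj : V → V → Prop)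
    (hdag : IsDAG adj) (hnv : NoVStruct adj) (a x : V)
    (hx : x = a ∨ insert a {u | adj u a} ⊆ {u | adj u x})
    (hns : ¬ IsSink adj x) :
    ∃ y : V, insert a {u | adj u a} ⊆ {u | adj u y} ∧ adj x y ∧ IsSink adj y := by
  rcases hx with rfl | hx
  · obtain ⟨w, hwK, hKw⟩ := step adj hdag hnv x hns
    have hxw : adj x w := hKw (Set.mem_insert x _)
    obtain ⟨y, hy1, hy2, hy3⟩ :=
      auxmain adj hdag hnv x (Fintype.card V) w (Nat.sub_le _ _) hKw
    refine ⟨y, hy1, ?_, hy3⟩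
    rcases hy2 with rfl | hy2
    · exact hxw
    · exact hy2 (Set.mem_insert_of_mem w (show x ∈ {u | adj u w} from hxw))
  · obtain ⟨y, hy1, hy2, hy3⟩ :=
      auxmain adj hdag hnv a (Fintype.card V) x (Nat.sub_le _ _) hx
    refine ⟨y, hy1, ?_, hy3⟩
    rcases hy2 with rfl | hy2
    · exact absurd hy3 hns
    · exact hy2 (Set.mem_insert x _)
end

section
/- Let D be a finite DAG without v-structures, a a vertex, Cᵃ = {a} ∪ parents_D(a), and Sᵃ = {z : Cᵃ ⊆ parents_D(z)}. Let H = D[Sᵃ] be the induced sub-DAG on Sᵃ. If x is a sink vertex of H, then x is a sink vertex of D. -/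
/-- With Cᵃ = {a} ∪ parents(a), Sᵃ = {z : Cᵃ ⊆ parents(z)}, and H = D[Sᵃ]:
every sink vertex of H is a sink vertex of D. -/
theorem stmt14 {V : Type*} [Fintype V] (adj : V → V → Prop)
    (hdag : IsDAG adj) (hnv : NoVStruct adj) (a x : V)
    (hx : IsSinkOn adj {z | insert a {u | adj u a} ⊆ {u | adj u z}} x) :
    IsSink adj x := by
  set S : Set V := {z | insert a {u | adj u a} ⊆ {u | adj u z}} with hS
  obtain ⟨hxS, ⟨⟨hKsub, hKclique⟩, hKmax⟩⟩ := hx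
  have hax : adj a x := hxS (Set.mem_insert _ _)
  have hpa : ∀ u, adj u a → adj u x := fun u hu => hxS (Set.mem_insert_of_mem _ hu)
  constructor
  · intro u hu v hv huv
    rcases hu with rfl | hu
    · rcases hv with rfl | hv
      · exact absurd rfl huv
      · exact Or.inr hv
    · rcases hv with rfl | hv
      · exact Or.inl hu
      · exact hnv x u v hu hv huv
  · intro C' hC' hsub
    apply Set.Subset.antisymm hsub
    intro y hy
    by_contra hyM
    have hyx : y ≠ x := fun h => hyM (h ▸ Set.mem_insert _ _)
    have hypx : ¬ adj y x := fun h => hyM (Set.mem_insert_of_mem _ h)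
    have haC : a ∈ C' := hsub (Set.mem_insert_of_mem _ hax)
    have hya : y ≠ a := fun h => hyM (Set.mem_insert_of_mem _ (h ▸ hax))
    have hay : adj a y := by
      rcases hC' haC hy hya.symm with h | h
      · exact h
      · exact absurd (hpa y h) hypx
    have hyS : y ∈ S := by
      intro u hu
      rcases hu with rfl | hu
      · exact hay
      · have huC : u ∈ C' := hsub (Set.mem_insert_of_mem _ (hpa u hu))
        have huy : u ≠ y := fun h => hyM (Set.mem_insert_of_mem _ (h ▸ hpa u hu))
        rcases hC' huC hy huy with h | h
        · exact h
        · exact absurd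
            (Relation.TransGen.head h (Relation.TransGen.head hu
              (Relation.TransGen.single hay))) (hdag y)
    have hKC' : insert x {u | u ∈ S ∧ adj u x} ⊆ C' := by
      intro u hu
      rcases hu with rfl | hu
      · exact hsub (Set.mem_insert _ _)
      · exact hsub (Set.mem_insert_of_mem _ hu.2)
    have hclq : IsCliqueOn adj S (insert y (insert x {u | u ∈ S ∧ adj u x})) := by
      constructor
      · intro u hu
        rcases hu with rfl | hu
        · exact hyS
        · rcases hu with rfl | hu
          · exact hxS
          · exact hu.1
      · have hsubC' : insert y (insert x {u | u ∈ S ∧ adj u x}) ⊆ C' :=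
          Set.insert_subset hy hKC'
        intro u hu v hv huv
        exact hC' (hsubC' hu) (hsubC' hv) huv
    have key := hKmax _ hclq (Set.subset_insert _ _)
    have : y ∈ insert x {u | u ∈ S ∧ adj u x} := by
      rw [key]; exact Set.mem_insert _ _
    rcases this with rfl | h
    · exact hyx rfl
    · exact hypx h.2
end

section
/- Let G be a finite split graph, i.e., its vertex set can be partitioned into a clique C and an independent set Z. Then n − |𝒞| = ω − 1, where n is the number of vertices, 𝒞 is the set of maximal cliques of G, and ω is the maximum clique size. -/
/-- A maximal clique of a simple graph (as a vertex set). -/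
def MaxClique {V : Type*} (G : SimpleGraph V) (C : Set V) : Prop :=
  G.IsClique C ∧ ∀ C' : Set V, G.IsClique C' → C ⊆ C' → C = C'

/-! Every clique of a split graph meets the independent side `Cᶜ` in at most one vertex `z`, and
then lies in the closed neighbourhood `N[z]`, which is itself a clique. Hence the maximal cliques
are the pairwise distinct sets `N[z]` for `z ∉ C`, together with `C` exactly when `C` is maximal;
and a largest clique has `|C|` vertices if `C` is maximal, and `|C| + 1` otherwise (`C` plus a
vertex adjacent to all of `C`). In both cases `|𝒞| + ω = n + 1`. -/

namespace SimpleGraph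

variable {V : Type*} {G : SimpleGraph V} {C K : Set V} {z : V}

def closedNeighborSet (G : SimpleGraph V) (v : V) : Set V := insert v (G.neighborSet v)

theorem mem_closedNeighborSet_self : z ∈ G.closedNeighborSet z := Set.mem_insert z _

theorem IsClique.subset_closedNeighborSet (hK : G.IsClique K) (hz : z ∈ K) :
    K ⊆ G.closedNeighborSet z := by
  intro w hw
  by_cases hwz : w = z
  · exact Or.inl hwz
  · exact Or.inr (hK hz hw (Ne.symm hwz))

theorem IsIndepSet.injOn_closedNeighborSet {S : Set V} (hS : G.IsIndepSet S) :
    S.InjOn G.closedNeighborSet := by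
  intro z₁ h₁ z₂ h₂ heq
  have hmem : z₁ ∈ G.closedNeighborSet z₂ := heq ▸ mem_closedNeighborSet_self
  rcases hmem with rfl | hadj
  · rfl
  · exact absurd hadj (hS h₂ h₁ (G.ne_of_adj hadj))

theorem not_maxClique_iff_exists_isClique_insert (hC : G.IsClique C) :
    ¬ MaxClique G C ↔ ∃ z ∉ C, G.IsClique (insert z C) := by
  constructor
  · intro hmax
    obtain ⟨C', hC', hCC', hne⟩ : ∃ C', G.IsClique C' ∧ C ⊆ C' ∧ C ≠ C' := by
      simpa [MaxClique, hC] using hmax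
    obtain ⟨z, hzC', hzC⟩ := Set.exists_of_ssubset (hCC'.ssubset_of_ne hne)
    exact ⟨z, hzC, hC'.subset (Set.insert_subset hzC' hCC')⟩
  · rintro ⟨z, hzC, hz⟩ ⟨-, hmax⟩
    exact hzC (hmax _ hz (Set.subset_insert z C) ▸ Set.mem_insert z C)

theorem IsIndepSet.neighborSet_subset (hI : G.IsIndepSet Cᶜ) (hz : z ∉ C) :
    G.neighborSet z ⊆ C := by
  intro w hw
  by_contra hwC
  exact hI hz hwC (G.ne_of_adj hw) hw

theorem closedNeighborSet_subset_insert (hI : G.IsIndepSet Cᶜ) (hz : z ∉ C) :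
    G.closedNeighborSet z ⊆ insert z C :=
  Set.insert_subset_insert (hI.neighborSet_subset hz)

theorem isClique_closedNeighborSet (hC : G.IsClique C) (hI : G.IsIndepSet Cᶜ) (hz : z ∉ C) :
    G.IsClique (G.closedNeighborSet z) :=
  isClique_insert.mpr ⟨hC.subset (hI.neighborSet_subset hz), fun _ hb _ => hb⟩

theorem maxClique_closedNeighborSet (hC : G.IsClique C) (hI : G.IsIndepSet Cᶜ) (hz : z ∉ C) :
    MaxClique G (G.closedNeighborSet z) :=
  ⟨isClique_closedNeighborSet hC hI hz, fun _ hK hsub =>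
    hsub.antisymm (hK.subset_closedNeighborSet (hsub mem_closedNeighborSet_self))⟩

theorem IsClique.subset_or_subset_closedNeighborSet (hK : G.IsClique K) :
    K ⊆ C ∨ ∃ z ∉ C, K ⊆ G.closedNeighborSet z := by
  by_cases hKC : K ⊆ C
  · exact Or.inl hKC
  · obtain ⟨z, hzK, hzC⟩ := Set.not_subset.mp hKC
    exact Or.inr ⟨z, hzC, hK.subset_closedNeighborSet hzK⟩

theorem maxClique_iff (hC : G.IsClique C) (hI : G.IsIndepSet Cᶜ) :
    MaxClique G K ↔ (K = C ∧ MaxClique G C) ∨ ∃ z ∉ C, G.closedNeighborSet z = K := by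
  constructor
  · intro hK
    rcases hK.1.subset_or_subset_closedNeighborSet with hKC | ⟨z, hz, hKz⟩
    · have hCK : K = C := hK.2 C hC hKC
      exact Or.inl ⟨hCK, hCK ▸ hK⟩
    · exact Or.inr ⟨z, hz, (hK.2 _ (isClique_closedNeighborSet hC hI hz) hKz).symm⟩
  · rintro (⟨rfl, hK⟩ | ⟨z, hz, rfl⟩)
    · exact hK
    · exact maxClique_closedNeighborSet hC hI hz

open Classical in
theorem ncard_setOf_maxClique [Finite V] (hC : G.IsClique C) (hI : G.IsIndepSet Cᶜ) :
    {K | MaxClique G K}.ncard = Cᶜ.ncard + if MaxClique G C then 1 else 0 := by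
  have himage : (G.closedNeighborSet '' Cᶜ).ncard = Cᶜ.ncard :=
    hI.injOn_closedNeighborSet.ncard_image
  split_ifs with hmax
  · have hCnot : C ∉ G.closedNeighborSet '' Cᶜ := by
      rintro ⟨z, hz, hzC⟩
      exact hz (hzC ▸ mem_closedNeighborSet_self)
    have hset : {K | MaxClique G K} = insert C (G.closedNeighborSet '' Cᶜ) := by
      ext K
      rw [Set.mem_ofPred_eq, maxClique_iff hC hI]
      simp [hmax]
    rw [hset, Set.ncard_insert_of_notMem hCnot, himage]
  · have hset : {K | MaxClique G K} = G.closedNeighborSet '' Cᶜ := by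
      ext K
      rw [Set.mem_ofPred_eq, maxClique_iff hC hI]
      simp [hmax]
    rw [hset, himage, add_zero]

theorem ncard_closedNeighborSet_le [Finite V] (hI : G.IsIndepSet Cᶜ) (hz : z ∉ C) {c : V}
    (hc : c ∈ C) (hzc : ¬ G.Adj z c) : (G.closedNeighborSet z).ncard ≤ C.ncard := by
  have hsub : G.closedNeighborSet z ⊆ insert z (C \ {c}) :=
    Set.insert_subset_insert fun w hw =>
      ⟨hI.neighborSet_subset hz hw, fun hwc => hzc (Set.mem_singleton_iff.mp hwc ▸ hw)⟩
  calc (G.closedNeighborSet z).ncard ≤ (insert z (C \ {c})).ncard := Set.ncard_le_ncard hsub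
    _ ≤ (C \ {c}).ncard + 1 := Set.ncard_insert_le _ _
    _ = C.ncard := Set.ncard_sdiff_singleton_add_one hc

theorem isGreatest_ncard_isNClique [Finite V] {n : ℕ} (hK : G.IsClique K) (hn : K.ncard = n)
    (hle : ∀ K', G.IsClique K' → K'.ncard ≤ n) :
    IsGreatest {t | ∃ s : Finset V, G.IsNClique t s} n := by
  refine ⟨⟨K.toFinite.toFinset, ⟨by simpa using hK, ?_⟩⟩, ?_⟩
  · rw [← hn, Set.ncard_eq_toFinset_card K]
  · rintro t ⟨s, hs⟩
    rw [← hs.card_eq, ← Set.ncard_coe_finset]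
    exact hle _ hs.isClique

open Classical in
theorem isGreatest_cliqueSizes [Finite V] (hC : G.IsClique C) (hI : G.IsIndepSet Cᶜ) :
    IsGreatest {t | ∃ s : Finset V, G.IsNClique t s}
      (C.ncard + if MaxClique G C then 0 else 1) := by
  split_ifs with hmax
  · refine isGreatest_ncard_isNClique hC (add_zero _).symm fun K hK => ?_
    rcases hK.subset_or_subset_closedNeighborSet with hKC | ⟨z, hz, hKz⟩
    · exact Set.ncard_le_ncard hKC
    · obtain ⟨c, hc, -, hnadj⟩ : ∃ c ∈ C, z ≠ c ∧ ¬ G.Adj z c := by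
        have : ¬ G.IsClique (insert z C) := fun h =>
          (not_maxClique_iff_exists_isClique_insert hC).mpr ⟨z, hz, h⟩ hmax
        simpa [isClique_insert, hC] using this
      exact (Set.ncard_le_ncard hKz).trans (ncard_closedNeighborSet_le hI hz hc hnadj)
  · obtain ⟨z, hz, hzC⟩ := (not_maxClique_iff_exists_isClique_insert hC).mp hmax
    refine isGreatest_ncard_isNClique hzC (Set.ncard_insert_of_notMem hz) fun K hK => ?_
    rcases hK.subset_or_subset_closedNeighborSet with hKC | ⟨w, hw, hKw⟩
    · exact (Set.ncard_le_ncard hKC).trans (Nat.le_succ _)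
    · calc K.ncard ≤ (insert w C).ncard :=
            Set.ncard_le_ncard (hKw.trans (closedNeighborSet_subset_insert hI hw))
        _ ≤ C.ncard + 1 := Set.ncard_insert_le _ _

end SimpleGraph

open SimpleGraph in
/-- For a finite split graph (vertices partitioned into a clique C and an independent
set Z), n − |𝒞| = ω − 1, where n is the number of vertices, 𝒞 the set of maximal
cliques and ω the maximum clique size. -/
theorem stmt18 {V : Type*} [Fintype V] (G : SimpleGraph V)
    (C Z : Set V) (hunion : C ∪ Z = Set.univ) (hdisj : C ∩ Z = ∅)
    (hC : G.IsClique C) (hZ : ∀ u ∈ Z, ∀ v ∈ Z, ¬ G.Adj u v)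
    (ω : ℕ) (hω : IsGreatest {t : ℕ | ∃ s : Finset V, G.IsNClique t s} ω) :
    Fintype.card V - {K : Set V | MaxClique G K}.ncard = ω - 1 := by
  obtain rfl : Z = Cᶜ := (IsCompl.of_eq hdisj hunion).compl_eq.symm
  have hI : G.IsIndepSet Cᶜ := fun u hu v hv _ => hZ u hu v hv
  have hn : C.ncard + Cᶜ.ncard = Fintype.card V := by
    rw [Set.ncard_add_ncard_compl, Nat.card_eq_fintype_card]
  rw [hω.unique (isGreatest_cliqueSizes hC hI), ncard_setOf_maxClique hC hI, ← hn]
  split_ifs <;> omega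
end
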